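/- arXiv:1406.1067 — 11 statements merged into one kernel-verified Lean document; each statement's English description precedes it below -/
import Mathlib

section
/- Let q be a prime power, n ≥ 1, let b_0, …, b_{n-1} ∈ F_{q^n}, let ξ ∈ F_{q^n} be nonzero, define B(x,y) = Tr_{q^n/q}(Σ_{i=0}^{n-1} b_i x y^{q^i}) for x,y ∈ F_{q^n}, define the binary operation x*y = xy + B(x,y)·ξ on F_{q^n}, and set M(X) = ξ·Σ_{i=0}^{n-1} b_i X^{q^i}. Then x*a ≠ 0 for all x, a ∈ F_{q^n} with x ≠ 0 and a ≠ 0 (i.e., * has no zero divisors, so * defines a presemifield multiplication on F_{q^n}) if and only if Tr_{q^n/q}(M(a)/a) ≠ -1 for every a ∈ F_{q^n} with a ≠ 0. -/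
/-!
Writing `L a = ∑ bᵢ a^{qⁱ}` and `T` for the trace, `x * a = x a + T(x L a) ξ`, and `T` is
`F_q`-linear with values in `F_q`. If `T(ξ L a / a) = -1`, then `x = -ξ / a` is a zero divisor.
Conversely, if `x a + t ξ = 0` with `t = T(x L a)`, then `t ≠ 0` and `x = -t ξ / a`, so
`t = T(-t ξ L a / a) = -t T(ξ L a / a)`, i.e. `T(ξ L a / a) = -1`.
-/

open Finset

/-- On a field of order `q ^ n` this is the trace `Tr_{q^n/q}`. -/
def powTrace {R : Type*} [CommSemiring R] (q n : ℕ) (u : R) : R :=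
  ∑ j ∈ range n, u ^ q ^ j

theorem powTrace_mul_of_pow_eq_self {R : Type*} [CommSemiring R] {q n : ℕ} {c : R}
    (hc : c ^ q = c) (u : R) : powTrace q n (c * u) = c * powTrace q n u := by
  have hcj : ∀ j, c ^ q ^ j = c := fun j => by
    induction j with
    | zero => simp
    | succ j ih => rw [pow_succ, pow_mul, ih, hc]
  simp only [powTrace, mul_sum, mul_pow, hcj]

section Frobenius

variable {R : Type*} [CommRing R] (p k n : ℕ) [ExpChar R p]

theorem powTrace_neg (u : R) : powTrace (p ^ k) n (-u) = -powTrace (p ^ k) n u := by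
  simp only [powTrace, ← sum_neg_distrib, ← pow_mul, ← iterateFrobenius_def,
    map_neg (iterateFrobenius R p _)]

theorem powTrace_pow_eq_self {u : R} (hu : u ^ (p ^ k) ^ n = u) :
    powTrace (p ^ k) n u ^ p ^ k = powTrace (p ^ k) n u := by
  rw [powTrace, sum_pow_char_pow]
  simp_rw [← pow_mul _ (_ ^ _) (p ^ k), ← pow_succ]
  have hshift := sum_range_succ' (fun j => u ^ (p ^ k) ^ j) n
  rw [sum_range_succ, hu, pow_zero, pow_one] at hshift
  exact add_right_cancel hshift.symm

end Frobenius

theorem FiniteField.exists_charP_of_card_eq_pow {E : Type*} [Field E] [Fintype E] {q n : ℕ}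
    (hE : Fintype.card E = q ^ n) : ∃ p k : ℕ, p.Prime ∧ CharP E p ∧ q = p ^ k := by
  obtain ⟨m, hp, hm⟩ := FiniteField.card E (ringChar E)
  have hn : n ≠ 0 := by
    rintro rfl
    exact (Fintype.one_lt_card (α := E)).ne' (by rw [hE, pow_zero])
  obtain ⟨k, -, hk⟩ := (Nat.dvd_prime_pow hp).1 (hm ▸ hE ▸ dvd_pow_self q hn)
  exact ⟨ringChar E, k, hp, ringChar.charP E, hk⟩

theorem mul_add_mul_ne_zero_iff {E : Type*} [Field E] (T L : E → E) {ξ : E} (hξ : ξ ≠ 0)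
    (hneg : ∀ u, T (-u) = -T u) (hmul : ∀ w u, T (T w * u) = T w * T u) :
    (∀ x a : E, x ≠ 0 → a ≠ 0 → x * a + T (x * L a) * ξ ≠ 0) ↔
      ∀ a : E, a ≠ 0 → T (ξ * L a / a) ≠ -1 := by
  constructor
  · intro H a ha hT
    refine H (-(ξ / a)) a (neg_ne_zero.mpr (div_ne_zero hξ ha)) ha ?_
    rw [show -(ξ / a) * L a = -(ξ * L a / a) by ring, hneg, hT]
    field_simp
    ring
  · intro H x a hx ha hzero
    set t := T (x * L a) with ht
    have ht0 : t ≠ 0 := by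
      rintro h0
      rw [h0, zero_mul, add_zero] at hzero
      exact mul_ne_zero hx ha hzero
    have hx_eq : x = -(t * ξ) / a := by
      rw [eq_div_iff ha]
      linear_combination hzero
    have htt : t = -(t * T (ξ * L a / a)) := by
      conv_lhs => rw [ht, hx_eq, show -(t * ξ) / a * L a = -(t * (ξ * L a / a)) by ring]
      rw [hneg, hmul]
    exact H a ha (mul_left_cancel₀ ht0 (by linear_combination htt))

theorem stmt_0_general (q n : ℕ)
    (E : Type*) [Field E] [Fintype E] (hE : Fintype.card E = q ^ n)
    (b : ℕ → E) (ξ : E) (hξ : ξ ≠ 0) :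
    (∀ x a : E, x ≠ 0 → a ≠ 0 →
        x * a + (∑ j ∈ Finset.range n,
          (∑ i ∈ Finset.range n, b i * x * a ^ q ^ i) ^ q ^ j) * ξ ≠ 0)
      ↔ ∀ a : E, a ≠ 0 →
        (∑ j ∈ Finset.range n,
          ((ξ * ∑ i ∈ Finset.range n, b i * a ^ q ^ i) / a) ^ q ^ j) ≠ -1 := by
  obtain ⟨p, k, hp, hchar, rfl⟩ := FiniteField.exists_charP_of_card_eq_pow hE
  have : ExpChar E p := ExpChar.prime hp
  have hinner : ∀ x a : E, ∑ i ∈ range n, b i * x * a ^ (p ^ k) ^ i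
      = x * ∑ i ∈ range n, b i * a ^ (p ^ k) ^ i := fun x a => by
    rw [mul_sum]
    exact sum_congr rfl fun i _ => by ring
  simp only [hinner]
  have htrace_fixed (w : E) : powTrace (p ^ k) n w ^ p ^ k = powTrace (p ^ k) n w :=
    powTrace_pow_eq_self p k n (hE ▸ FiniteField.pow_card w)
  exact mul_add_mul_ne_zero_iff (powTrace (p ^ k) n)
    (fun a => ∑ i ∈ range n, b i * a ^ (p ^ k) ^ i) hξ (powTrace_neg p k n)
    fun w u => powTrace_mul_of_pow_eq_self (htrace_fixed w) u

/-- switching `x*y = xy + B(x,y)·ξ` of the finite field multiplication on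
`F_{q^n}` has no zero divisors iff `Tr_{q^n/q}(M(a)/a) ≠ -1` for all nonzero `a`,
where `B(x,y) = Tr_{q^n/q}(Σ_i b_i x y^{q^i})` and `M(X) = ξ·Σ_i b_i X^{q^i}`. -/
theorem stmt_0 (q n : ℕ) (hq : ∃ p k : ℕ, p.Prime ∧ 0 < k ∧ q = p ^ k) (hn : 1 ≤ n)
    (E : Type*) [Field E] [Fintype E] (hE : Fintype.card E = q ^ n)
    (b : ℕ → E) (ξ : E) (hξ : ξ ≠ 0) :
    (∀ x a : E, x ≠ 0 → a ≠ 0 →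
        x * a + (∑ j ∈ Finset.range n,
          (∑ i ∈ Finset.range n, b i * x * a ^ q ^ i) ^ q ^ j) * ξ ≠ 0)
      ↔ ∀ a : E, a ≠ 0 →
        (∑ j ∈ Finset.range n,
          ((ξ * ∑ i ∈ Finset.range n, b i * a ^ q ^ i) / a) ^ q ^ j) ≠ -1 :=
  stmt_0_general q n E hE b ξ hξ
end

section
/- Let q be a prime power, n ≥ 1, let b_0, …, b_{n-1} ∈ F_{q^n}, define x*y = xy + Tr_{q^n/q}(Σ_{i=0}^{n-1} b_i x y^{q^i}) on F_{q^n}, and set t = Σ_{i=0}^{n-1} b_i. Assume 1 + Tr_{q^n/q}(t) ≠ 0 (equivalently, 1*1 ≠ 0). Define A : F_{q^n} → F_{q^n} by A(x) = x + Tr_{q^n/q}(−tx/(1 + Tr_{q^n/q}(t))). Then A(x)*1 = x for every x ∈ F_{q^n}. -/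
/-- with `x*y = xy + Tr_{q^n/q}(Σ_i b_i x y^{q^i})`, `t = Σ_i b_i`, and
`A(x) = x + Tr(−tx/(1+Tr(t)))` (assuming `1 + Tr(t) ≠ 0`), one has `A(x)*1 = x`. -/
theorem stmt_3 (q n : ℕ) (hq : ∃ p k : ℕ, p.Prime ∧ 0 < k ∧ q = p ^ k) (hn : 1 ≤ n)
    (E : Type*) [Field E] [Fintype E] (hE : Fintype.card E = q ^ n)
    (b : ℕ → E) (t : E) (ht : t = ∑ i ∈ Finset.range n, b i)
    (h1 : (1 : E) + ∑ j ∈ Finset.range n, t ^ q ^ j ≠ 0)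
    (A : E → E)
    (hA : ∀ x : E, A x = x + ∑ j ∈ Finset.range n,
        (-t * x / (1 + ∑ j' ∈ Finset.range n, t ^ q ^ j')) ^ q ^ j) :
    ∀ x : E,
      A x * 1 + (∑ j ∈ Finset.range n,
        (∑ i ∈ Finset.range n, b i * A x * (1 : E) ^ q ^ i) ^ q ^ j) = x := by
  intro x
  obtain ⟨p, k, hp, hk, rfl⟩ := hq
  haveI : Fact p.Prime := ⟨hp⟩
  -- E has characteristic p
  haveI hcp : CharP E p := by
    obtain ⟨m, hm, hcard⟩ := FiniteField.card E (ringChar E)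
    have hd : p ∣ ringChar E ^ (m : ℕ) := by
      rw [← hcard, hE]
      exact dvd_trans (dvd_pow_self p hk.ne')
        (dvd_pow_self (p ^ k) (by omega : n ≠ 0))
    have : p = ringChar E :=
      (Nat.prime_dvd_prime_iff_eq hp hm).mp (hp.dvd_of_dvd_pow hd)
    rw [this]; exact ringChar.charP E
  -- the "trace-like" sum
  set S : E → E := fun u => ∑ j ∈ Finset.range n, u ^ (p ^ k) ^ j with hS
  have hSapp : ∀ u : E, S u = ∑ j ∈ Finset.range n, u ^ (p ^ k) ^ j := fun u => rfl
  have key : ∀ v : E, v ^ p ^ k = iterateFrobenius E p k v := fun v => rfl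
  have hfrob : ∀ (j : ℕ) (u : E), u ^ (p ^ k) ^ j = iterateFrobenius E p (k * j) u := by
    intro j u; rw [iterateFrobenius_def, pow_mul]
  have hadd : ∀ (j : ℕ) (a c : E), (a + c) ^ (p ^ k) ^ j = a ^ (p ^ k) ^ j + c ^ (p ^ k) ^ j := by
    intro j a c; rw [hfrob, hfrob, hfrob, map_add]
  have hneg : ∀ (j : ℕ) (a : E), (-a) ^ (p ^ k) ^ j = -(a ^ (p ^ k) ^ j) := by
    intro j a; rw [hfrob, hfrob, map_neg]
  -- elements of the form S u are fixed by the q-power Frobenius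
  have hpow_card : ∀ u : E, u ^ (p ^ k) ^ n = u := by
    intro u; rw [← hE, FiniteField.pow_card]
  have hSfix1 : ∀ u : E, (S u) ^ (p ^ k) = S u := by
    intro u
    have step : (S u) ^ p ^ k = ∑ j ∈ Finset.range n, u ^ (p ^ k) ^ (j + 1) := by
      rw [hSapp, key, map_sum]
      refine Finset.sum_congr rfl fun j _ => ?_
      rw [← key, ← pow_mul, ← pow_succ]
    have h2 : ∑ j ∈ Finset.range (n + 1), u ^ (p ^ k) ^ j
        = (∑ j ∈ Finset.range n, u ^ (p ^ k) ^ (j + 1)) + u ^ (p ^ k) ^ 0 :=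
      Finset.sum_range_succ' _ _
    have h3 : ∑ j ∈ Finset.range (n + 1), u ^ (p ^ k) ^ j
        = (∑ j ∈ Finset.range n, u ^ (p ^ k) ^ j) + u ^ (p ^ k) ^ n :=
      Finset.sum_range_succ _ _
    have h4 := h2.symm.trans h3
    rw [hpow_card, pow_zero, pow_one] at h4
    rw [step, hSapp]
    exact add_right_cancel h4
  have hSfix : ∀ (j : ℕ) (u : E), (S u) ^ (p ^ k) ^ j = S u := by
    intro j u
    induction j with
    | zero => simp
    | succ j ih => rw [pow_succ, pow_mul, ih, hSfix1]
  set s : E := 1 + S t with hs_def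
  have hs : s ≠ 0 := h1
  have hsfix : ∀ j : ℕ, s ^ (p ^ k) ^ j = s := by
    intro j
    rw [hs_def, hadd, one_pow, hSfix j t]
  set c : E := -t * x / s with hc_def
  -- the inner sum simplifies
  have hinner : ∀ y : E, (∑ i ∈ Finset.range n, b i * y * (1 : E) ^ (p ^ k) ^ i) = t * y := by
    intro y
    simp only [one_pow, mul_one]
    rw [ht, ← Finset.sum_mul]
  have hAx : A x = x + S c := hA x
  have hSc : S c = -(S (t * x)) * s⁻¹ := by
    have hc2 : c = -(t * x) * s⁻¹ := by rw [hc_def]; ring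
    rw [hSapp, hSapp, hc2]
    simp only [mul_pow, hneg, inv_pow, hsfix, neg_mul]
    rw [Finset.sum_neg_distrib, Finset.sum_mul]
  have hSmul : ∀ v : E, (∀ j : ℕ, v ^ (p ^ k) ^ j = v) → S (t * v) = S t * v := by
    intro v hv
    rw [hSapp, hSapp, Finset.sum_mul]
    refine Finset.sum_congr rfl fun j _ => ?_
    rw [mul_pow, hv]
  have hStSc : S (t * S c) = S t * S c := hSmul (S c) (fun j => hSfix j c)
  have hSadd : ∀ a c : E, S (a + c) = S a + S c := by
    intro a c
    rw [hSapp, hSapp, hSapp]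
    simp only [hadd]
    exact Finset.sum_add_distrib
  have hT : S t = s - 1 := by rw [hs_def]; ring
  calc A x * 1 + ∑ j ∈ Finset.range n,
        (∑ i ∈ Finset.range n, b i * A x * (1 : E) ^ (p ^ k) ^ i) ^ (p ^ k) ^ j
      = A x + S (t * A x) := by
        rw [mul_one]
        congr 1
        refine Finset.sum_congr rfl fun j _ => ?_
        rw [hinner]
    _ = x + S c + (S (t * x) + S t * S c) := by
        rw [hAx, mul_add, hSadd, hStSc]
    _ = x := by
        rw [hSc, hT]
        field_simp
        ring
end

section
/- Let q be a prime power and let L(X) = a_1 X^q + a_0 X with a_0, a_1 ∈ F_{q^2}. Then Tr_{q^2/q}(L(x)/x) ≠ 0 for every nonzero x ∈ F_{q^2} if and only if for every y ∈ F_{q^2} satisfying a_1 y^2 + Tr_{q^2/q}(a_0)·y + a_1^q = 0, the equation x^{q-1} = y has no solution x ∈ F_{q^2} with x ≠ 0. -/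
private lemma stmt4_key (q : ℕ) (hq : ∃ p k : ℕ, p.Prime ∧ 0 < k ∧ q = p ^ k)
    (E : Type*) [Field E] [Fintype E] (hE : Fintype.card E = q ^ 2)
    (a0 a1 : E) (x : E) (hx : x ≠ 0) :
    ((a1 * x ^ q + a0 * x) / x + ((a1 * x ^ q + a0 * x) / x) ^ q) * x ^ (q - 1)
      = a1 * (x ^ (q - 1)) ^ 2 + (a0 + a0 ^ q) * x ^ (q - 1) + a1 ^ q := by
  obtain ⟨p, k, hp, hk, rfl⟩ := hq
  haveI : Fact p.Prime := ⟨hp⟩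
  have hq2 : 2 ≤ p ^ k := by
    calc 2 ≤ p := hp.two_le
    _ ≤ p ^ k := Nat.le_self_pow hk.ne' p
  -- characteristic
  obtain ⟨p', hp'⟩ := CharP.exists E
  have hp'prime : p'.Prime := CharP.char_is_prime E p'
  obtain ⟨n, hnp, hn⟩ := FiniteField.card E p'
  have hpp' : p' = p := by
    have hdvd : p' ∣ (p ^ k) ^ 2 := by
      rw [← hE, hn]
      exact dvd_pow_self p' n.2.ne'
    have : p' ∣ p := hp'prime.dvd_of_dvd_pow (hp'prime.dvd_of_dvd_pow hdvd)
    exact (Nat.prime_dvd_prime_iff_eq hp'prime hp).mp this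
  haveI : CharP E p := by rw [← hpp']; exact hp'
  have hsub : (p ^ k - 1) + 1 = p ^ k := Nat.succ_pred_eq_of_pos (pow_pos hp.pos k)
  have hxq : x ^ (p ^ k) = x ^ (p ^ k - 1) * x := by
    rw [← pow_succ, hsub]
  set y : E := x ^ (p ^ k - 1) with hy
  have ht : (a1 * x ^ (p ^ k) + a0 * x) / x = a1 * y + a0 := by
    rw [hxq]
    field_simp
  have hfrob : (a1 * y + a0) ^ (p ^ k) = a1 ^ (p ^ k) * y ^ (p ^ k) + a0 ^ (p ^ k) := by
    rw [add_pow_char_pow, mul_pow]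
  have hyq : y ^ (p ^ k) * y = 1 := by
    have hcard : x ^ ((p ^ k) ^ 2 - 1) = 1 := by
      have := FiniteField.pow_card_sub_one_eq_one x hx
      rwa [hE] at this
    rw [hy, ← pow_mul, ← pow_add]
    have : (p ^ k - 1) * p ^ k + (p ^ k - 1) = (p ^ k) ^ 2 - 1 := by
      have h1 : 1 ≤ p ^ k := by omega
      cases' Nat.exists_eq_add_of_le h1 with m hm
      rw [hm]
      have e1 : 1 + m - 1 = m := by omega
      have e2 : (1 + m) ^ 2 = (m * (1 + m) + m) + 1 := by ring
      rw [e1, e2, Nat.add_sub_cancel]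
    rw [this, hcard]
  rw [ht, hfrob]
  calc (a1 * y + a0 + (a1 ^ (p ^ k) * y ^ (p ^ k) + a0 ^ (p ^ k))) * y
      = a1 * y ^ 2 + (a0 + a0 ^ (p ^ k)) * y + a1 ^ (p ^ k) * (y ^ (p ^ k) * y) := by ring
    _ = a1 * y ^ 2 + (a0 + a0 ^ (p ^ k)) * y + a1 ^ (p ^ k) := by rw [hyq, mul_one]

/-- for `L(X) = a_1 X^q + a_0 X` over `F_{q^2}`, `Tr_{q^2/q}(L(x)/x) ≠ 0`
for all nonzero `x` iff for every `y` with `a_1 y^2 + Tr(a_0) y + a_1^q = 0`, the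
equation `x^{q-1} = y` has no nonzero solution. -/
theorem stmt_4 (q : ℕ) (hq : ∃ p k : ℕ, p.Prime ∧ 0 < k ∧ q = p ^ k)
    (E : Type*) [Field E] [Fintype E] (hE : Fintype.card E = q ^ 2)
    (a0 a1 : E) :
    (∀ x : E, x ≠ 0 →
        (a1 * x ^ q + a0 * x) / x + ((a1 * x ^ q + a0 * x) / x) ^ q ≠ 0)
      ↔ ∀ y : E, a1 * y ^ 2 + (a0 + a0 ^ q) * y + a1 ^ q = 0 →
          ¬∃ x : E, x ≠ 0 ∧ x ^ (q - 1) = y := by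
  constructor
  · rintro h y hy ⟨x, hx, rfl⟩
    have hkey := stmt4_key q hq E hE a0 a1 x hx
    rw [hy] at hkey
    have hyne : x ^ (q - 1) ≠ 0 := pow_ne_zero _ hx
    exact h x hx (by
      rcases mul_eq_zero.mp hkey with h1 | h1
      · exact h1
      · exact absurd h1 hyne)
  · intro h x hx htr
    have hkey := stmt4_key q hq E hE a0 a1 x hx
    rw [htr, zero_mul] at hkey
    exact h (x ^ (q - 1)) hkey.symm ⟨x, hx, rfl⟩
end

section
/- Let q be a prime power and let L(X) = a_1 X^q + a_0 X with a_0, a_1 ∈ F_{q^2}. Then Tr_{q^2/q}(L(x)/x) ≠ 0 for every nonzero x ∈ F_{q^2} if and only if the polynomial g(X) = X^2 + Tr_{q^2/q}(a_0)·X + a_1^{q+1} ∈ F_q[X] has two distinct roots in F_q. -/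
/-!
Let `F ⊂ E` be the subfield with `q` elements. For `x ≠ 0` the element `u = x ^ (q - 1)` runs over
the whole group `u ^ (q + 1) = 1` (as `Eˣ` is cyclic), and `u · Tr(L(x)/x) = a₁u² + Tr(a₀)u + a₁^q`.
If `a₁ ≠ 0`, the substitution `z = a₁u` turns this into `g(z)` with `z ^ (q + 1) = a₁ ^ (q + 1)`, so
the condition says that `g` has no root of norm `a₁ ^ (q + 1)`. The polynomial `g ∈ F[X]` has a root
`z ∈ E`, and `z ^ q` is a root too: either both roots lie in `F`, or they are `z, z ^ q` and then
`z ^ (q + 1)` is their product `a₁ ^ (q + 1)`. A double root `r ∈ F` also has norm `r² = a₁ ^ (q + 1)`,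
whereas two distinct roots `r ≠ s` in `F` have norms `r² ≠ rs`. If `a₁ = 0`, both sides say
`Tr(a₀) ≠ 0`.
-/

open Polynomial Module

theorem IsCyclic.range_powMonoidHom_eq_ker {G : Type*} [CommGroup G] [IsCyclic G] [Finite G]
    {a b : ℕ} (h : Nat.card G = a * b) :
    (powMonoidHom a : G →* G).range = (powMonoidHom b).ker := by
  have ha : 0 < a := Nat.pos_of_ne_zero <| by rintro rfl; simp [Nat.card_pos.ne'] at h
  refine Subgroup.eq_of_le_of_card_ge ?_ ?_
  · rintro _ ⟨x, rfl⟩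
    simp [MonoidHom.mem_ker, ← pow_mul, ← h, pow_card_eq_one']
  · rw [IsCyclic.card_powMonoidHom_range, IsCyclic.card_powMonoidHom_ker, h,
      Nat.gcd_mul_left_left, Nat.gcd_mul_right_left, Nat.mul_div_cancel_left _ ha]

section Quadratic

variable {K : Type*} [Field K] {b c r s : K}

theorem sq_add_mul_add_eq_sub_mul_sub (hrs : r ≠ s) (hr0 : r ^ 2 + b * r + c = 0)
    (hs0 : s ^ 2 + b * s + c = 0) (z : K) : z ^ 2 + b * z + c = (z - r) * (z - s) := by
  have hsum : r + s + b = 0 := by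
    have : (r - s) * (r + s + b) = 0 := by linear_combination hr0 - hs0
    exact (mul_eq_zero.mp this).resolve_left (sub_ne_zero.mpr hrs)
  linear_combination (z - r) * hsum + hr0

theorem pow_succ_ne_of_pow_eq_self {n : ℕ} (hc0 : c ≠ 0) (hr : r ^ n = r) (hrs : r ≠ s)
    (hr0 : r ^ 2 + b * r + c = 0) (hs0 : s ^ 2 + b * s + c = 0) : r ^ (n + 1) ≠ c := by
  intro h
  have hc : c = r * s := by simpa using sq_add_mul_add_eq_sub_mul_sub hrs hr0 hs0 0
  rw [pow_succ, hr, hc] at h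
  rcases mul_eq_zero.mp (show r * (r - s) = 0 by linear_combination h) with h0 | h0
  · exact hc0 (by rw [hc, h0, zero_mul])
  · exact hrs (sub_eq_zero.mp h0)

theorem forall_pow_succ_eq_one_imp_ne_zero_iff {a : K} (ha : a ≠ 0) (n : ℕ) :
    (∀ u : K, u ^ (n + 1) = 1 → a * u ^ 2 + b * u + a ^ n ≠ 0) ↔
      ∀ z : K, z ^ (n + 1) = a ^ (n + 1) → z ^ 2 + b * z + a ^ (n + 1) ≠ 0 := by
  refine ⟨fun h z hz hz0 ↦ h (z / a) ?_ ?_, fun h u hu hu0 ↦ h (a * u) ?_ ?_⟩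
  · rw [div_pow, hz, div_self (pow_ne_zero _ ha)]
  · field_simp
    linear_combination hz0
  · rw [mul_pow, hu, mul_one]
  · linear_combination a * hu0

end Quadratic

namespace FiniteField

theorem forall_ne_zero_pow_iff {K : Type*} [Field K] [Fintype K] {a b : ℕ}
    (h : Fintype.card K - 1 = a * b) {P : K → Prop} :
    (∀ x : K, x ≠ 0 → P (x ^ a)) ↔ ∀ u : K, u ^ b = 1 → P u := by
  refine ⟨fun hP u hu ↦ ?_, fun hP x hx ↦ hP _ ?_⟩
  · have hu0 : u ≠ 0 := by
      rintro rfl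
      have : b ≠ 0 := by
        rintro rfl
        have := Fintype.one_lt_card (α := K)
        omega
      simp [this] at hu
    have : Units.mk0 u hu0 ∈ (powMonoidHom a : Kˣ →* Kˣ).range := by
      rw [IsCyclic.range_powMonoidHom_eq_ker (by rwa [Nat.card_units, Nat.card_eq_fintype_card])]
      simp [MonoidHom.mem_ker, Units.ext_iff, hu]
    obtain ⟨x, hx⟩ := this
    have hxu : (x : K) ^ a = u := by simpa [Units.ext_iff] using hx
    exact hxu ▸ hP x x.ne_zero
  · rw [← pow_mul, ← h, pow_card_sub_one_eq_one x hx]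

section Extension

variable {F E : Type*} [Field F] [Field E] [Algebra F E] [Finite E]

theorem exists_aeval_eq_zero_of_natDegree_dvd_finrank {f : F[X]} (hf : Irreducible f)
    (h : f.natDegree ∣ finrank F E) : ∃ x : E, aeval x f = 0 := by
  have := Fact.mk hf
  obtain ⟨φ⟩ := nonempty_algHom_of_finrank_dvd (K := AdjoinRoot f) (L := E)
    (by rwa [(AdjoinRoot.powerBasis hf.ne_zero).finrank, AdjoinRoot.powerBasis_dim])
  refine ⟨φ (AdjoinRoot.root f), ?_⟩
  rw [aeval_algHom_apply, AdjoinRoot.aeval_eq, AdjoinRoot.mk_self, map_zero]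

theorem exists_aeval_eq_zero_of_natDegree_eq_two (hFE : finrank F E = 2) {f : F[X]}
    (hf : f.natDegree = 2) : ∃ x : E, aeval x f = 0 := by
  obtain ⟨g, hg, k, rfl⟩ := exists_irreducible_of_natDegree_pos (f := f) (by omega)
  have hg2 : g.natDegree ≤ 2 :=
    hf ▸ natDegree_le_of_dvd (dvd_mul_right g k) (by rintro h; simp [h] at hf)
  have hdvd : g.natDegree ∣ finrank F E := by
    have := hg.natDegree_pos
    interval_cases g.natDegree <;> simp [hFE]
  obtain ⟨x, hx⟩ := exists_aeval_eq_zero_of_natDegree_dvd_finrank hg hdvd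
  exact ⟨x, by rw [map_mul, hx, zero_mul]⟩

variable [Fintype F]

local notation "q" => Fintype.card F

theorem pow_card_eq_self_iff_mem_bot {x : E} : x ^ q = x ↔ x ∈ (⊥ : IntermediateField F E) := by
  rw [IsGalois.mem_bot_iff_fixed]
  refine ⟨fun hx g ↦ ?_, fun hx ↦ hx (frobeniusAlgEquivOfAlgebraic F E)⟩
  obtain ⟨n, rfl⟩ := (bijective_frobeniusAlgEquivOfAlgebraic_pow F E).2 g
  simp only [AlgEquiv.coe_pow, coe_frobeniusAlgEquivOfAlgebraic]
  exact Function.iterate_fixed hx _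

theorem add_pow_card (x y : E) : (x + y) ^ q = x ^ q + y ^ q :=
  map_add (frobeniusAlgEquivOfAlgebraic F E) x y

theorem mul_add_pow_card_eq {u : E} (hu : u ^ (q + 1) = 1) (a0 a1 : E) :
    u * ((a1 * u + a0) + (a1 * u + a0) ^ q) = a1 * u ^ 2 + (a0 + a0 ^ q) * u + a1 ^ q := by
  rw [add_pow_card, mul_pow]
  linear_combination a1 ^ q * hu

theorem pow_card_eq_self_or_eq_neg_sub {b c z : E} (hb : b ^ q = b) (hc : c ^ q = c)
    (hz : z ^ 2 + b * z + c = 0) : z ^ q = z ∨ z ^ q = -b - z := by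
  have hzq : (z ^ q) ^ 2 + b * z ^ q + c = 0 := by
    have := congrArg (frobeniusAlgEquivOfAlgebraic F E) hz
    simp only [map_add, map_mul, map_pow, map_zero, coe_frobeniusAlgEquivOfAlgebraic] at this
    rwa [hb, hc] at this
  have : (z ^ q - z) * (z ^ q - (-b - z)) = 0 := by linear_combination hzq - hz
  rcases mul_eq_zero.mp this with h | h
  · exact .inl (sub_eq_zero.mp h)
  · exact .inr (sub_eq_zero.mp h)

theorem exists_roots_sq_add_mul_iff {b : E} (hb : b ^ q = b) :
    (∃ r s : E, r ^ q = r ∧ s ^ q = s ∧ r ≠ s ∧ r ^ 2 + b * r = 0 ∧ s ^ 2 + b * s = 0) ↔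
      b ≠ 0 := by
  constructor
  · rintro ⟨r, s, -, -, hrs, hr0, hs0⟩ rfl
    simp_all
  · intro hb0
    refine ⟨0, -b, zero_pow Fintype.card_ne_zero, ?_, (neg_ne_zero.mpr hb0).symm, by ring, by ring⟩
    rw [pow_card_eq_self_iff_mem_bot] at hb ⊢
    exact neg_mem hb

end Extension

section DegreeTwo

variable {F E : Type*} [Field F] [Fintype F] [Field E] [Fintype E] [Algebra F E]
  (hFE : finrank F E = 2)
include hFE

local notation "q" => Fintype.card F

theorem card_eq_card_sq : Fintype.card E = q ^ 2 := by
  rw [Module.card_eq_pow_finrank (K := F), hFE]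

theorem pow_card_pow_card (x : E) : (x ^ q) ^ q = x := by
  rw [← pow_mul, ← sq, ← card_eq_card_sq hFE, pow_card]

theorem exists_sq_add_mul_add_eq_zero {b c : E} (hb : b ^ q = b) (hc : c ^ q = c) :
    ∃ z : E, z ^ 2 + b * z + c = 0 := by
  obtain ⟨b', rfl⟩ := IntermediateField.mem_bot.mp (pow_card_eq_self_iff_mem_bot.mp hb)
  obtain ⟨c', rfl⟩ := IntermediateField.mem_bot.mp (pow_card_eq_self_iff_mem_bot.mp hc)
  obtain ⟨z, hz⟩ := exists_aeval_eq_zero_of_natDegree_eq_two hFE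
    (f := X ^ 2 + C b' * X + C c') (by compute_degree!)
  exact ⟨z, by simpa [Algebra.smul_def] using hz⟩

theorem forall_pow_card_add_one_eq_imp_ne_zero_iff {b c : E} (hb : b ^ q = b) (hc : c ^ q = c)
    (hc0 : c ≠ 0) :
    (∀ z : E, z ^ (q + 1) = c → z ^ 2 + b * z + c ≠ 0) ↔
      ∃ r s : E, r ^ q = r ∧ s ^ q = s ∧ r ≠ s ∧
        r ^ 2 + b * r + c = 0 ∧ s ^ 2 + b * s + c = 0 := by
  constructor
  · intro h
    by_contra hno
    obtain ⟨z, hz⟩ := exists_sq_add_mul_add_eq_zero hFE hb hc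
    have hzw : z * (-b - z) = c := by linear_combination -hz
    refine h z ?_ hz
    rcases pow_card_eq_self_or_eq_neg_sub hb hc hz with hzq | hzq
    · by_cases hzw' : z = -b - z
      · rw [pow_succ, hzq, ← hzw, ← hzw']
      · refine absurd ⟨z, -b - z, hzq, ?_, hzw', hz, by linear_combination hz⟩ hno
        rw [pow_card_eq_self_iff_mem_bot] at hb hzq ⊢
        exact sub_mem (neg_mem hb) hzq
    · rw [pow_succ, hzq, mul_comm, hzw]
  · rintro ⟨r, s, hr, hs, hrs, hr0, hs0⟩ z hz hz0
    rw [sq_add_mul_add_eq_sub_mul_sub hrs hr0 hs0] at hz0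
    rcases mul_eq_zero.mp hz0 with h | h
    · rw [sub_eq_zero.mp h] at hz
      exact pow_succ_ne_of_pow_eq_self hc0 hr hrs hr0 hs0 hz
    · rw [sub_eq_zero.mp h] at hz
      exact pow_succ_ne_of_pow_eq_self hc0 hs (Ne.symm hrs) hs0 hr0 hz

theorem forall_trace_div_ne_zero_iff (a0 a1 : E) :
    (∀ x : E, x ≠ 0 → (a1 * x ^ q + a0 * x) / x + ((a1 * x ^ q + a0 * x) / x) ^ q ≠ 0) ↔
      ∀ u : E, u ^ (q + 1) = 1 → a1 * u ^ 2 + (a0 + a0 ^ q) * u + a1 ^ q ≠ 0 := by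
  have hdiv (x : E) (hx : x ≠ 0) : (a1 * x ^ q + a0 * x) / x = a1 * x ^ (q - 1) + a0 := by
    rw [div_eq_iff hx, add_mul, mul_assoc, ← pow_succ, Nat.sub_add_cancel Fintype.card_pos]
  have hcard : Fintype.card E - 1 = (q - 1) * (q + 1) := by
    rw [card_eq_card_sq hFE, mul_comm, ← Nat.sq_sub_sq, one_pow]
  calc _ ↔ ∀ x : E, x ≠ 0 → (a1 * x ^ (q - 1) + a0) + (a1 * x ^ (q - 1) + a0) ^ q ≠ 0 :=
        forall₂_congr fun x hx ↦ by rw [hdiv x hx]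
    _ ↔ _ := forall_ne_zero_pow_iff (P := fun u ↦ a1 * u + a0 + (a1 * u + a0) ^ q ≠ 0) hcard
    _ ↔ _ := forall₂_congr fun u hu ↦ by
        have hu0 : u ≠ 0 := by rintro rfl; simp at hu
        rw [← mul_add_pow_card_eq hu, mul_ne_zero_iff, and_iff_right hu0]

theorem forall_trace_div_ne_zero_iff_exists_roots (a0 a1 : E) :
    (∀ x : E, x ≠ 0 → (a1 * x ^ q + a0 * x) / x + ((a1 * x ^ q + a0 * x) / x) ^ q ≠ 0) ↔
      ∃ r s : E, r ^ q = r ∧ s ^ q = s ∧ r ≠ s ∧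
        r ^ 2 + (a0 + a0 ^ q) * r + a1 ^ (q + 1) = 0 ∧
        s ^ 2 + (a0 + a0 ^ q) * s + a1 ^ (q + 1) = 0 := by
  have hb : (a0 + a0 ^ q) ^ q = a0 + a0 ^ q := by
    rw [add_pow_card, pow_card_pow_card hFE, add_comm]
  rw [forall_trace_div_ne_zero_iff hFE]
  rcases eq_or_ne a1 0 with rfl | ha1
  · simp only [zero_pow Fintype.card_ne_zero, zero_pow (Nat.succ_ne_zero _), zero_mul, zero_add,
      add_zero, exists_roots_sq_add_mul_iff hb]
    exact ⟨fun h hb0 ↦ h 1 (one_pow _) (by rw [hb0, zero_mul]),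
      fun hb0 u hu ↦ mul_ne_zero hb0 (by rintro rfl; simp at hu)⟩
  · have hc : (a1 ^ (q + 1)) ^ q = a1 ^ (q + 1) := by
      rw [pow_succ, mul_pow, pow_card_pow_card hFE, mul_comm]
    rw [forall_pow_succ_eq_one_imp_ne_zero_iff ha1]
    exact forall_pow_card_add_one_eq_imp_ne_zero_iff hFE hb hc (pow_ne_zero _ ha1)

end DegreeTwo

theorem exists_algebra_finrank_eq_two {E : Type*} [Field E] [Fintype E] {q : ℕ}
    (hE : Fintype.card E = q ^ 2) :
    ∃ (F : Type) (_ : Field F) (_ : Fintype F) (_ : Algebra F E),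
      Fintype.card F = q ∧ finrank F E = 2 := by
  obtain ⟨p, _, n, hp, hcard⟩ := card' E
  have := Fact.mk hp
  obtain ⟨m, -, rfl⟩ : ∃ m ≤ (n : ℕ), q = p ^ m :=
    (Nat.dvd_prime_pow hp).mp (hcard ▸ hE ▸ Dvd.intro_left _ (sq _).symm)
  have hm : m ≠ 0 := by
    rintro rfl
    simp [Fintype.one_lt_card.ne'] at hE
  let := ZMod.algebra E p
  have hfinrank : finrank (ZMod p) E = m * 2 := by
    apply Nat.pow_right_injective hp.two_le
    simp only [pow_finrank_eq_card, hE, pow_mul]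
  obtain ⟨φ⟩ := nonempty_algHom_of_finrank_dvd (K := GaloisField p m) (L := E)
    (by rw [GaloisField.finrank p hm, hfinrank]; exact dvd_mul_right m 2)
  let := φ.toAlgebra
  let := Fintype.ofFinite (GaloisField p m)
  have hF : Fintype.card (GaloisField p m) = p ^ m := by
    rw [Fintype.card_eq_nat_card, GaloisField.card p m hm]
  refine ⟨GaloisField p m, inferInstance, inferInstance, φ.toAlgebra, hF, ?_⟩
  apply Nat.pow_right_injective (hF ▸ Fintype.one_lt_card)
  simp only [← hF, ← Module.card_eq_pow_finrank, hE]

end FiniteField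

theorem stmt_5_general (q : ℕ)
    (E : Type*) [Field E] [Fintype E] (hE : Fintype.card E = q ^ 2)
    (a0 a1 : E) :
    (∀ x : E, x ≠ 0 →
        (a1 * x ^ q + a0 * x) / x + ((a1 * x ^ q + a0 * x) / x) ^ q ≠ 0)
      ↔ ∃ r s : E, r ^ q = r ∧ s ^ q = s ∧ r ≠ s ∧
          r ^ 2 + (a0 + a0 ^ q) * r + a1 ^ (q + 1) = 0 ∧
          s ^ 2 + (a0 + a0 ^ q) * s + a1 ^ (q + 1) = 0 := by
  obtain ⟨F, _, _, _, rfl, hFE⟩ := FiniteField.exists_algebra_finrank_eq_two hE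
  exact FiniteField.forall_trace_div_ne_zero_iff_exists_roots hFE a0 a1

/-- for `L(X) = a_1 X^q + a_0 X` over `F_{q^2}`, `Tr_{q^2/q}(L(x)/x) ≠ 0`
for all nonzero `x` iff `g(X) = X^2 + Tr(a_0) X + a_1^{q+1}` has two distinct roots
in the subfield `F_q = {r : r^q = r}`. -/
theorem stmt_5 (q : ℕ) (hq : ∃ p k : ℕ, p.Prime ∧ 0 < k ∧ q = p ^ k)
    (E : Type*) [Field E] [Fintype E] (hE : Fintype.card E = q ^ 2)
    (a0 a1 : E) :
    (∀ x : E, x ≠ 0 →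
        (a1 * x ^ q + a0 * x) / x + ((a1 * x ^ q + a0 * x) / x) ^ q ≠ 0)
      ↔ ∃ r s : E, r ^ q = r ∧ s ^ q = s ∧ r ≠ s ∧
          r ^ 2 + (a0 + a0 ^ q) * r + a1 ^ (q + 1) = 0 ∧
          s ^ 2 + (a0 + a0 ^ q) * s + a1 ^ (q + 1) = 0 :=
  stmt_5_general q E hE a0 a1
end

section
/- Let q be a power of an odd prime, let a_1 ∈ F_{q^4} be nonzero with Tr_{q^4/q}(a_1) ≠ 0, and let ã_0 ∈ F_{q^4} satisfy Tr_{q^4/q}(ã_0) = −1. Define x*y = xy + Tr_{q^4/q}(a_1 x y^{q^2} + ã_0 x y) on F_{q^4}, set t = a_1 + ã_0 (so that 1 + Tr_{q^4/q}(t) = Tr_{q^4/q}(a_1) ≠ 0), and define A(x) = x + Tr_{q^4/q}(−tx/(1 + Tr_{q^4/q}(t))). Then for every v ∈ F_{q^4} with a_1 v ∈ F_{q^2}, the identity A(v*x)*y = A(v*y)*x holds for all x, y ∈ F_{q^4}. -/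
/-- The trace `Tr_{q^4/q}(z) = z + z^q + z^{q^2} + z^{q^3}` on `F_{q^4}`. -/
def tr4 (q : ℕ) {E : Type*} [Field E] (z : E) : E := ∑ j ∈ Finset.range 4, z ^ q ^ j

/-- The switched multiplication `x*y = xy + Tr_{q^4/q}(a_1 x y^{q^2} + ã_0 x y)`. -/
def star7 (q : ℕ) {E : Type*} [Field E] (a1 a0 : E) (x y : E) : E :=
  x * y + tr4 q (a1 * x * y ^ q ^ 2 + a0 * x * y)

/-- The map `A(x) = x + Tr(−tx/(1+Tr(t)))` with `t = a_1 + ã_0`. -/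
def A7 (q : ℕ) {E : Type*} [Field E] (a1 a0 : E) (x : E) : E :=
  x + tr4 q (-(a1 + a0) * x / (1 + tr4 q (a1 + a0)))

/-- for odd `q`, `a_1 ≠ 0` with `Tr_{q^4/q}(a_1) ≠ 0` and
`Tr_{q^4/q}(ã_0) = −1`, for every `v` with `a_1 v ∈ F_{q^2}` one has
`A(v*x)*y = A(v*y)*x` for all `x, y ∈ F_{q^4}`. -/
theorem stmt_7 (q : ℕ) (hq : ∃ p k : ℕ, p.Prime ∧ Odd p ∧ 0 < k ∧ q = p ^ k)
    (E : Type*) [Field E] [Fintype E] (hE : Fintype.card E = q ^ 4)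
    (a1 a0 : E) (ha1 : a1 ≠ 0) (htra1 : tr4 q a1 ≠ 0) (htra0 : tr4 q a0 = -1) :
    ∀ v : E, (a1 * v) ^ q ^ 2 = a1 * v →
      ∀ x y : E,
        star7 q a1 a0 (A7 q a1 a0 (star7 q a1 a0 v x)) y
          = star7 q a1 a0 (A7 q a1 a0 (star7 q a1 a0 v y)) x := by
  obtain ⟨p, k, hp, hpodd, hk, hqpk⟩ := hq
  -- characteristic of E is p
  have hpring : p = ringChar E := by
    obtain ⟨n, hprime, hcard⟩ := FiniteField.card E (ringChar E)
    have h1 : p ∣ (ringChar E) ^ (n : ℕ) := by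
      rw [← hcard, hE, hqpk, ← pow_mul]
      exact dvd_pow_self p (by positivity)
    exact (Nat.prime_dvd_prime_iff_eq hp hprime).mp (hp.dvd_of_dvd_pow h1)
  haveI : CharP E p := hpring ▸ ringChar.charP E
  haveI := Fact.mk hp
  -- Frobenius additivity
  have hadd : ∀ (j : ℕ) (a b : E), (a + b) ^ q ^ j = a ^ q ^ j + b ^ q ^ j := by
    intro j a b
    rw [hqpk, ← pow_mul]
    exact add_pow_char_pow a b p (k * j)
  have hqodd : ∀ j : ℕ, Odd (q ^ j) := fun j => (hqpk ▸ hpodd.pow).pow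
  have hneg : ∀ (j : ℕ) (a : E), (-a) ^ q ^ j = -(a ^ q ^ j) := fun j a =>
    (hqodd j).neg_pow a
  have hpowpow : ∀ (i j : ℕ) (z : E), (z ^ q ^ i) ^ q ^ j = z ^ q ^ (i + j) := by
    intro i j z; rw [← pow_mul, ← pow_add]
  have h4 : ∀ z : E, z ^ q ^ 4 = z := by
    intro z; rw [← hE]; exact FiniteField.pow_card z
  have h5 : ∀ z : E, z ^ q ^ 5 = z ^ q ^ 1 := by
    intro z
    have : (5 : ℕ) = 4 + 1 := rfl
    rw [this, pow_add, pow_mul, h4]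
  -- trace expansion
  have htr : ∀ z : E, tr4 q z = z ^ q ^ 0 + z ^ q ^ 1 + z ^ q ^ 2 + z ^ q ^ 3 := by
    intro z
    show ∑ j ∈ Finset.range 4, z ^ q ^ j = _
    rw [Finset.sum_range_succ, Finset.sum_range_succ, Finset.sum_range_succ,
      Finset.sum_range_one]
  have tr4_add : ∀ a b : E, tr4 q (a + b) = tr4 q a + tr4 q b := by
    intro a b
    rw [htr, htr, htr, hadd, hadd, hadd, hadd]; ring
  have tr4_neg : ∀ a : E, tr4 q (-a) = -tr4 q a := by
    intro a
    rw [htr, htr, hneg, hneg, hneg, hneg]; ring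
  -- trace of a q²-power
  have tr4_q2 : ∀ z : E, tr4 q (z ^ q ^ 2) = tr4 q z := by
    intro z
    rw [htr, htr, hpowpow, hpowpow, hpowpow, hpowpow]
    norm_num
    rw [h4, h5]
    ring
  -- the trace has values fixed by Frobenius
  have tr4_fix : ∀ z : E, (tr4 q z) ^ q ^ 1 = tr4 q z := by
    intro z
    rw [htr, hadd, hadd, hadd, hpowpow, hpowpow, hpowpow, hpowpow]
    norm_num
    rw [h4]
    ring
  -- fixed elements stay fixed under all iterates
  have hfix : ∀ (α : E), α ^ q ^ 1 = α → ∀ j, α ^ q ^ j = α := by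
    intro α hα j
    induction j with
    | zero => simp
    | succ n ih =>
      rw [pow_succ, pow_mul, ih]
      simpa using hα
  have tr4_smul : ∀ (α z : E), α ^ q ^ 1 = α → tr4 q (α * z) = α * tr4 q z := by
    intro α z hα
    rw [htr, htr, mul_pow, mul_pow, mul_pow, mul_pow,
      hfix α hα 0, hfix α hα 1, hfix α hα 2, hfix α hα 3]
    ring
  have hx44 : ∀ z : E, (z ^ q ^ 2) ^ q ^ 2 = z := by
    intro z
    rw [hpowpow]
    norm_num
    exact h4 z
  intro v hv x y
  have hc : (1 : E) + tr4 q (a1 + a0) = tr4 q a1 := by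
    rw [tr4_add, htra0]; ring
  have hcq : (tr4 q a1) ^ q ^ 1 = tr4 q a1 := tr4_fix a1
  have hdiv : ∀ z : E, tr4 q (z / tr4 q a1) = (tr4 q a1)⁻¹ * tr4 q z := by
    intro z
    rw [div_eq_mul_inv, mul_comm, tr4_smul _ _ (by rw [inv_pow, hcq])]
  have key : ∀ x : E, A7 q a1 a0 (star7 q a1 a0 v x) = v * x := by
    intro x
    have hcanc : tr4 q (a1 * v * x ^ q ^ 2) = tr4 q (a1 * v * x) := by
      have h1 : a1 * v * x ^ q ^ 2 = (a1 * v * x) ^ q ^ 2 := by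
        rw [mul_pow, hv]
      rw [h1, tr4_q2]
    simp only [A7, star7, hc]
    set α := tr4 q (a1 * v * x ^ q ^ 2 + a0 * v * x) with hαdef
    have hα : α ^ q ^ 1 = α := tr4_fix _
    have hαval : α = tr4 q (a1 * v * x) + tr4 q (a0 * v * x) := by
      rw [hαdef, tr4_add, hcanc]
    rw [hdiv]
    have e1 : -(a1 + a0) * (v * x + α)
        = (-(a1 * v * x) + -(a0 * v * x)) + α * (-(a1 + a0)) := by ring
    rw [e1, tr4_add, tr4_add, tr4_smul _ _ hα, tr4_neg, tr4_neg, tr4_neg,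
      tr4_add, htra0, hαval]
    field_simp
    ring
  rw [key x, key y]
  simp only [star7]
  have hsy : tr4 q (a1 * (v * x) * y ^ q ^ 2) = tr4 q (a1 * (v * y) * x ^ q ^ 2) := by
    have h1 : a1 * (v * x) * y ^ q ^ 2 = (a1 * (v * y) * x ^ q ^ 2) ^ q ^ 2 := by
      rw [show a1 * (v * y) * x ^ q ^ 2 = a1 * v * y * x ^ q ^ 2 from by ring,
        mul_pow, mul_pow, hv, hx44]
      ring
    rw [h1, tr4_q2]
  rw [tr4_add, tr4_add, hsy]
  have e2 : a0 * (v * x) * y = a0 * (v * y) * x := by ring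
  rw [e2]
  ring
end

section
/- Let q be a prime power and let u, v ∈ F_{q^3} be nonzero with N_{q^3/q}(−v/u) ≠ 1, where N_{q^3/q}(x) = x^{q^2+q+1} is the norm. Then for every β ∈ F_{q^3} satisfying Tr_{q^3/q}(u^{q^2} v^q β) = u^{q^2+q+1} + v^{q^2+q+1}, the equation u·x^{q^2−1} + v·x^{q−1} + β = 0 has no solution x ∈ F_{q^3} with x ≠ 0. -/
/-!
Write `σ` for the Frobenius `x ↦ x ^ q`, an automorphism of `F_{q^3}` of order three.
Multiplying the equation by `x` gives `u σ²x + v σx + β x = 0`; applying `σ` and `σ²` yields two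
more linear relations between `x, σx, σ²x`. The trace condition on `β` is exactly what makes a
combination of the three relations collapse to `N(β) x = 0`, so `β = 0`. Then `σ(σx) = (-v/u) σx`,
i.e. `-v/u = σy / y` with `y = σx`, and such a quotient has norm `1` (the easy half of Hilbert 90).
-/

section CyclicNormTrace

variable {E : Type*} [Field E] (σ : E →+* E)

/-- For the Frobenius `x ↦ x ^ q` of `F_{q^3}` these are `N_{q^3/q}` and `Tr_{q^3/q}`. -/
def cyclicNorm (a : E) : E := a * σ a * σ (σ a)

def cyclicTrace (a : E) : E := a + σ a + σ (σ a)

variable {σ}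

theorem cyclicNorm_div_self (hσ : ∀ a, σ (σ (σ a)) = a) {y : E} (hy : y ≠ 0) :
    cyclicNorm σ (σ y / y) = 1 := by
  have hσy : σ y ≠ 0 := (map_ne_zero σ).mpr hy
  have hσσy : σ (σ y) ≠ 0 := (map_ne_zero σ).mpr hσy
  simp only [cyclicNorm, map_div₀, hσ]
  field_simp

theorem eq_zero_of_cyclicTrace_eq (hσ : ∀ a, σ (σ (σ a)) = a) {u v β x : E}
    (hT : cyclicTrace σ (σ (σ u) * σ v * β) = cyclicNorm σ u + cyclicNorm σ v)
    (hx : x ≠ 0) (h : u * σ (σ x) + v * σ x + β * x = 0) : β = 0 := by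
  have h₁ : σ u * x + σ v * σ (σ x) + σ β * σ x = 0 := by
    simpa only [map_add, map_mul, map_zero, hσ] using congrArg σ h
  have h₂ : σ (σ u) * σ x + σ (σ v) * x + σ (σ β) * σ (σ x) = 0 := by
    simpa only [map_add, map_mul, map_zero, hσ] using congrArg σ h₁
  simp only [cyclicTrace, cyclicNorm, map_mul, hσ] at hT
  -- the cofactors of the 3 × 3 system in `(x, σx, σ²x)`
  have hNx : β * σ β * σ (σ β) * x = 0 := by
    linear_combination (σ β * σ (σ β) - σ v * σ (σ u)) * h + (u * σ (σ u) - v * σ (σ β)) * h₁ +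
      (v * σ v - u * σ β) * h₂ + x * hT
  simpa [hx, map_eq_zero] using hNx

theorem cyclicNorm_neg_div_eq_one (hσ : ∀ a, σ (σ (σ a)) = a) {u v x : E} (hu : u ≠ 0)
    (hx : x ≠ 0) (h : u * σ (σ x) + v * σ x = 0) : cyclicNorm σ (-v / u) = 1 := by
  have hσx : σ x ≠ 0 := (map_ne_zero σ).mpr hx
  have hquot : -v / u = σ (σ x) / σ x := by
    field_simp
    linear_combination -h
  rw [hquot]
  exact cyclicNorm_div_self hσ hσx

theorem add_ne_zero_of_cyclicTrace_eq (hσ : ∀ a, σ (σ (σ a)) = a) {u v β x : E} (hu : u ≠ 0)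
    (hN : cyclicNorm σ (-v / u) ≠ 1)
    (hT : cyclicTrace σ (σ (σ u) * σ v * β) = cyclicNorm σ u + cyclicNorm σ v) (hx : x ≠ 0) :
    u * σ (σ x) + v * σ x + β * x ≠ 0 := by
  intro h
  obtain rfl := eq_zero_of_cyclicTrace_eq hσ hT hx h
  exact hN (cyclicNorm_neg_div_eq_one hσ hu hx (by simpa using h))

variable {q : ℕ}

theorem pow_sq_eq_apply_apply (hσq : ∀ a, σ a = a ^ q) (a : E) : a ^ q ^ 2 = σ (σ a) := by
  rw [hσq, hσq, ← pow_mul, sq]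

theorem pow_sq_add_add_one_eq_cyclicNorm (hσq : ∀ a, σ a = a ^ q) (a : E) :
    a ^ (q ^ 2 + q + 1) = cyclicNorm σ a := by
  rw [cyclicNorm, pow_add, pow_add, pow_one, pow_sq_eq_apply_apply hσq, ← hσq]
  ring

theorem sum_range_three_pow_eq_cyclicTrace (hσq : ∀ a, σ a = a ^ q) (a : E) :
    ∑ j ∈ Finset.range 3, a ^ q ^ j = cyclicTrace σ a := by
  simp [Finset.sum_range_succ, cyclicTrace, pow_sq_eq_apply_apply hσq, hσq]

end CyclicNormTrace

theorem stmt_8_general (q : ℕ) (hq : ∃ p k : ℕ, p.Prime ∧ 0 < k ∧ q = p ^ k)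
    (E : Type*) [Field E] [Fintype E] (hE : Fintype.card E = q ^ 3)
    (u v : E) (hu : u ≠ 0)
    (hN : (-v / u) ^ (q ^ 2 + q + 1) ≠ 1)
    (β : E)
    (hβ : ∑ j ∈ Finset.range 3, (u ^ q ^ 2 * v ^ q * β) ^ q ^ j
        = u ^ (q ^ 2 + q + 1) + v ^ (q ^ 2 + q + 1)) :
    ∀ x : E, x ≠ 0 → u * x ^ (q ^ 2 - 1) + v * x ^ (q - 1) + β ≠ 0 := by
  obtain ⟨p, k, hp, -, rfl⟩ := hq
  have : Fact p.Prime := ⟨hp⟩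
  have : CharP E p := charP_of_card_eq_prime_pow (f := k * 3) (by rw [hE, pow_mul])
  set σ := iterateFrobenius E p k
  have hσq : ∀ a, σ a = a ^ p ^ k := fun _ ↦ rfl
  have hσ : ∀ a, σ (σ (σ a)) = a := fun a ↦ by
    rw [hσq, ← pow_sq_eq_apply_apply hσq, ← pow_mul, ← pow_succ, ← hE, FiniteField.pow_card]
  simp only [pow_sq_add_add_one_eq_cyclicNorm hσq, pow_sq_eq_apply_apply hσq, ← hσq,
    sum_range_three_pow_eq_cyclicTrace hσq] at hN hβ
  intro x hx h
  refine add_ne_zero_of_cyclicTrace_eq hσ hu hN hβ hx ?_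
  have hq : 1 ≤ p ^ k := Nat.one_le_pow _ _ hp.pos
  have hσσx : σ (σ x) = x ^ ((p ^ k) ^ 2 - 1) * x := by
    rw [← pow_succ, Nat.sub_add_cancel (Nat.one_le_pow _ _ hq), pow_sq_eq_apply_apply hσq]
  have hσx : σ x = x ^ (p ^ k - 1) * x := by rw [← pow_succ, Nat.sub_add_cancel hq, hσq]
  rw [hσσx, hσx]
  linear_combination x * h

/-- for nonzero `u, v ∈ F_{q^3}` with `N_{q^3/q}(−v/u) ≠ 1` and every `β`
with `Tr_{q^3/q}(u^{q^2} v^q β) = u^{q^2+q+1} + v^{q^2+q+1}`, the equation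
`u x^{q^2−1} + v x^{q−1} + β = 0` has no nonzero solution. -/
theorem stmt_8 (q : ℕ) (hq : ∃ p k : ℕ, p.Prime ∧ 0 < k ∧ q = p ^ k)
    (E : Type*) [Field E] [Fintype E] (hE : Fintype.card E = q ^ 3)
    (u v : E) (hu : u ≠ 0) (hv : v ≠ 0)
    (hN : (-v / u) ^ (q ^ 2 + q + 1) ≠ 1)
    (β : E)
    (hβ : ∑ j ∈ Finset.range 3, (u ^ q ^ 2 * v ^ q * β) ^ q ^ j
        = u ^ (q ^ 2 + q + 1) + v ^ (q ^ 2 + q + 1)) :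
    ∀ x : E, x ≠ 0 → u * x ^ (q ^ 2 - 1) + v * x ^ (q - 1) + β ≠ 0 :=
  stmt_8_general q hq E hE u v hu hN β hβ
end

section
/- Let q be a prime power, let u, v ∈ F_{q^3} be nonzero with N_{q^3/q}(−v/u) ≠ 1, where N_{q^3/q}(x) = x^{q^2+q+1} is the norm, let θ ∈ F_{q^3} satisfy Tr_{q^3/q}(u^{q^2} v^q θ) = u^{q^2+q+1} + v^{q^2+q+1}, and let a ∈ F_{q^3} be nonzero. Define L(X) = u^{q^2} v^q (u a^{q^2−1} X^{q^2} + v a^{q−1} X^q + θ X). Then Tr_{q^3/q}(L(x)/x) ≠ 0 for every nonzero x ∈ F_{q^3}. -/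
/-- for nonzero `u, v ∈ F_{q^3}` with `N_{q^3/q}(−v/u) ≠ 1`, `θ` with
`Tr_{q^3/q}(u^{q^2} v^q θ) = u^{q^2+q+1} + v^{q^2+q+1}`, and nonzero `a`, the polynomial
`L(X) = u^{q^2} v^q (u a^{q^2−1} X^{q^2} + v a^{q−1} X^q + θ X)` satisfies
`Tr_{q^3/q}(L(x)/x) ≠ 0` for all nonzero `x`. -/
theorem stmt_9 (q : ℕ) (hq : ∃ p k : ℕ, p.Prime ∧ 0 < k ∧ q = p ^ k)
    (E : Type*) [Field E] [Fintype E] (hE : Fintype.card E = q ^ 3)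
    (u v : E) (hu : u ≠ 0) (hv : v ≠ 0)
    (hN : (-v / u) ^ (q ^ 2 + q + 1) ≠ 1)
    (θ : E)
    (hθ : ∑ j ∈ Finset.range 3, (u ^ q ^ 2 * v ^ q * θ) ^ q ^ j
        = u ^ (q ^ 2 + q + 1) + v ^ (q ^ 2 + q + 1))
    (a : E) (ha : a ≠ 0) :
    ∀ x : E, x ≠ 0 →
      ∑ j ∈ Finset.range 3,
        ((u ^ q ^ 2 * v ^ q *
          (u * a ^ (q ^ 2 - 1) * x ^ q ^ 2 + v * a ^ (q - 1) * x ^ q + θ * x)) / x) ^ q ^ j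
        ≠ 0 := by
  obtain ⟨p, k, hp, hk, hqpk⟩ := hq
  haveI hfp : Fact p.Prime := ⟨hp⟩
  have hq0 : 0 < q := by rw [hqpk]; exact pow_pos hp.pos k
  have hq1 : 1 ≤ q := hq0
  have h1q2 : 1 ≤ q ^ 2 := Nat.one_le_pow 2 q hq0
  haveI hchar : CharP E p := by
    obtain ⟨n, hn, hcard⟩ := FiniteField.card E (ringChar E)
    have hdvd : ringChar E ∣ p ^ (k * 3) := by
      have hEq : (ringChar E) ^ (n : ℕ) = p ^ (k * 3) := by
        rw [← hcard, hE, hqpk, ← pow_mul]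
      exact hEq ▸ dvd_pow_self (ringChar E) n.pos.ne'
    have : ringChar E = p :=
      (Nat.prime_dvd_prime_iff_eq hn hp).mp (hn.dvd_of_dvd_pow hdvd)
    rw [← this]; exact ringChar.charP E
  have hcube : ∀ y : E, y ^ q ^ 3 = y := by
    intro y; rw [← hE]; exact FiniteField.pow_card y
  have frobadd1 : ∀ X Y : E, (X + Y) ^ q = X ^ q + Y ^ q := by
    intro X Y; rw [hqpk]; exact add_pow_char_pow X Y p k
  have frobadd2 : ∀ X Y : E, (X + Y) ^ q ^ 2 = X ^ q ^ 2 + Y ^ q ^ 2 := by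
    intro X Y; rw [hqpk, show (p ^ k) ^ 2 = p ^ (k * 2) from by rw [pow_mul]]
    exact add_pow_char_pow X Y p (k * 2)
  have hneg : ∀ (y : E) (j : ℕ), (-y) ^ q ^ j = -(y ^ q ^ j) := by
    intro y j
    have h := map_neg (iterateFrobenius E p (k * j)) y
    rw [iterateFrobenius_def, iterateFrobenius_def] at h
    rw [hqpk, show (p ^ k) ^ j = p ^ (k * j) from by rw [pow_mul]]
    exact h
  intro x hx
  have hz : a * x ≠ 0 := mul_ne_zero ha hx
  set s : E := (a * x) ^ q / (a * x) with hsdef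
  have hzq : (a * x) ^ q ≠ 0 := pow_ne_zero _ hz
  have hs0 : s ≠ 0 := div_ne_zero hzq hz
  have hs1 : s ^ (q ^ 2 + q + 1) = 1 := by
    rw [hsdef, div_pow, ← pow_mul,
      show q * (q ^ 2 + q + 1) = q ^ 3 + (q ^ 2 + q) from by ring,
      pow_add, hcube (a * x),
      show (a * x) * (a * x) ^ (q ^ 2 + q) = (a * x) ^ (q ^ 2 + q + 1) from
        (pow_succ' (a * x) (q ^ 2 + q)).symm]
    exact div_self (pow_ne_zero _ hz)
  have hsq1 : s ^ (q + 1) = (a * x) ^ q ^ 2 / (a * x) := by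
    rw [hsdef, div_pow, ← pow_mul, div_eq_div_iff (pow_ne_zero _ hz) hz,
      ← pow_succ, ← pow_add]
    congr 1
    ring
  -- rewrite the summand
  have hrw : (u ^ q ^ 2 * v ^ q *
        (u * a ^ (q ^ 2 - 1) * x ^ q ^ 2 + v * a ^ (q - 1) * x ^ q + θ * x)) / x
      = u ^ q ^ 2 * v ^ q * (u * s ^ (q + 1) + v * s + θ) := by
    rw [hsq1, hsdef, pow_sub₀ a ha h1q2, pow_sub₀ a ha hq1, pow_one]
    field_simp
    ring
  rw [Finset.sum_range_succ, Finset.sum_range_succ, Finset.sum_range_one] at hθ ⊢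
  simp only [pow_zero, pow_one] at hθ ⊢
  rw [hrw]
  -- reduce hθ
  have hcq : (u ^ q ^ 2 * v ^ q * θ) ^ q = u * v ^ q ^ 2 * θ ^ q := by
    rw [mul_pow, mul_pow, ← pow_mul, ← pow_mul,
      show q ^ 2 * q = q ^ 3 from by ring, show q * q = q ^ 2 from by ring, hcube u]
  have hcq2 : (u ^ q ^ 2 * v ^ q * θ) ^ q ^ 2 = u ^ q * v * θ ^ q ^ 2 := by
    rw [mul_pow, mul_pow, ← pow_mul, ← pow_mul,
      show q ^ 2 * q ^ 2 = q ^ 3 * q from by ring, show q * q ^ 2 = q ^ 3 from by ring,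
      pow_mul, hcube u, hcube v]
  rw [hcq, hcq2] at hθ
  -- Frobenius expansions of the summand
  have hPq : (u ^ q ^ 2 * v ^ q * (u * s ^ (q + 1) + v * s + θ)) ^ q
      = u * v ^ q ^ 2 * (u ^ q * s ^ (q ^ 2 + q) + v ^ q * s ^ q + θ ^ q) := by
    simp only [mul_pow, frobadd1, ← pow_mul]
    rw [show q ^ 2 * q = q ^ 3 from by ring, hcube u,
      show q * q = q ^ 2 from by ring, show (q + 1) * q = q ^ 2 + q from by ring]
  have hPq2 : (u ^ q ^ 2 * v ^ q * (u * s ^ (q + 1) + v * s + θ)) ^ q ^ 2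
      = u ^ q * v * (u ^ q ^ 2 * s ^ (q ^ 2 + 1) + v ^ q ^ 2 * s ^ q ^ 2 + θ ^ q ^ 2) := by
    simp only [mul_pow, frobadd2, ← pow_mul]
    rw [show q ^ 2 * q ^ 2 = q ^ 3 * q from by ring, pow_mul, hcube u,
      show q * q ^ 2 = q ^ 3 from by ring, hcube v,
      show (q + 1) * q ^ 2 = q ^ 3 + q ^ 2 from by ring, pow_add, hcube s]
    ring
  -- Frobenius expansions of W
  have hWq : (u ^ q ^ 2 * s + v ^ q ^ 2) ^ q = u * s ^ q + v := by
    simp only [frobadd1, mul_pow, ← pow_mul]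
    rw [show q ^ 2 * q = q ^ 3 from by ring, hcube u, hcube v]
  have hWq2 : (u ^ q ^ 2 * s + v ^ q ^ 2) ^ q ^ 2 = u ^ q * s ^ q ^ 2 + v ^ q := by
    simp only [frobadd2, mul_pow, ← pow_mul]
    rw [show q ^ 2 * q ^ 2 = q ^ 3 * q from by ring, pow_mul, pow_mul, hcube u, hcube v]
  have hWsplit : (u ^ q ^ 2 * s + v ^ q ^ 2) ^ (q ^ 2 + q + 1)
      = (u ^ q * s ^ q ^ 2 + v ^ q) * (u * s ^ q + v) * (u ^ q ^ 2 * s + v ^ q ^ 2) := by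
    rw [pow_add, pow_add, pow_one, hWq, hWq2]
  have keyW : u ^ q ^ 2 * v ^ q * (u * s ^ (q + 1) + v * s + θ)
        + (u ^ q ^ 2 * v ^ q * (u * s ^ (q + 1) + v * s + θ)) ^ q
        + (u ^ q ^ 2 * v ^ q * (u * s ^ (q + 1) + v * s + θ)) ^ q ^ 2
      = (u ^ q ^ 2 * s + v ^ q ^ 2) ^ (q ^ 2 + q + 1) := by
    rw [hPq, hPq2, hWsplit]
    linear_combination hθ - u ^ (q ^ 2 + q + 1) * hs1
  rw [keyW]
  refine pow_ne_zero _ ?_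
  intro hW0
  have hu2 : u ^ q ^ 2 ≠ 0 := pow_ne_zero _ hu
  have hsval : s = (-v / u) ^ q ^ 2 := by
    rw [div_pow, hneg v 2, eq_div_iff hu2]
    linear_combination hW0
  apply hN
  have hw1 : ((-v / u) ^ (q ^ 2 + q + 1)) ^ q ^ 2 = 1 := by
    rw [← pow_mul, show (q ^ 2 + q + 1) * q ^ 2 = q ^ 2 * (q ^ 2 + q + 1) from by ring,
      pow_mul, ← hsval, hs1]
  rw [← hcube ((-v / u) ^ (q ^ 2 + q + 1)), show q ^ 3 = q ^ 2 * q from by ring,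
    pow_mul, hw1, one_pow]
end

section
/- Let q be a prime power and n ≥ 2. The integers 0, q−1, q^2−1, …, q^{n−1}−1 lie in pairwise distinct q-cyclotomic cosets modulo q^n−1, and the union of their q-cyclotomic cosets modulo q^n−1 has cardinality n^2 − n + 1 (the coset of 0 has size 1 and each coset of q^i−1 for 1 ≤ i ≤ n−1 has size n). -/
namespace Stmt12Aux

lemma powN (q n : ℕ) (hq : 1 ≤ q) : q ^ n ≡ 1 [MOD q ^ n - 1] := by
  have h : q ^ n - 1 + 1 = q ^ n :=
    Nat.succ_pred_eq_of_pos (Nat.one_le_pow _ _ (by omega))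
  show q ^ n % (q ^ n - 1) = 1 % (q ^ n - 1)
  have h2 : (q ^ n - 1 + 1) % (q ^ n - 1) = 1 % (q ^ n - 1) := Nat.add_mod_left _ _
  rwa [h] at h2

lemma red (q n : ℕ) (hq : 1 ≤ q) (hn : 0 < n) (m u : ℕ) :
    m * q ^ u % (q ^ n - 1) = m * q ^ (u % n) % (q ^ n - 1) := by
  have h1 : q ^ u ≡ q ^ (u % n) [MOD q ^ n - 1] := by
    conv_lhs => rw [← Nat.div_add_mod u n]
    rw [pow_add, pow_mul]
    calc (q ^ n) ^ (u / n) * q ^ (u % n)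
        ≡ 1 ^ (u / n) * q ^ (u % n) [MOD q ^ n - 1] :=
          ((powN q n hq).pow _).mul_right _
      _ = q ^ (u % n) := by rw [one_pow, one_mul]
  exact h1.mul_left m

lemma valA (q n i r : ℕ) (hq : 2 ≤ q) (hi : 1 ≤ i) (hin : i < n) (hr : i + r ≤ n) :
    (q ^ i - 1) * q ^ r % (q ^ n - 1) = q ^ (i + r) - q ^ r := by
  have h1 : (q ^ i - 1) * q ^ r = q ^ (i + r) - q ^ r := by
    rw [Nat.sub_mul, one_mul, ← pow_add]
  rw [h1]
  apply Nat.mod_eq_of_lt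
  have ha : q ^ r < q ^ (i + r) := Nat.pow_lt_pow_right (by omega) (by omega)
  rcases eq_or_lt_of_le hr with h' | h'
  · have h2 : 1 ≤ r := by omega
    have h3 : q ≤ q ^ r := Nat.le_self_pow (by omega) q
    have h4 : q ^ (i + r) = q ^ n := by rw [h']
    omega
  · have h4 : q ^ (i + r) ≤ q ^ (n - 1) := Nat.pow_le_pow_right (by omega) (by omega)
    have h5 : q ^ (n - 1) * q = q ^ n := by rw [← pow_succ]; congr 1; omega
    have h6 : q ^ (n - 1) * 2 ≤ q ^ (n - 1) * q := Nat.mul_le_mul_left _ hq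
    have h7 : q ≤ q ^ (n - 1) := Nat.le_self_pow (by omega) q
    omega

lemma valB (q n i r : ℕ) (hq : 2 ≤ q) (hin : i < n) (hr : r < n) (h : n < i + r) :
    (q ^ i - 1) * q ^ r % (q ^ n - 1) = q ^ n - 1 - (q ^ r - q ^ (i + r - n)) := by
  have hbc : q ^ i * q ^ r = q ^ n * q ^ (i + r - n) := by
    rw [← pow_add, ← pow_add]; congr 1; omega
  have hB1 : 1 ≤ q ^ (i + r - n) := Nat.one_le_pow _ _ (by omega)
  have hBR : q ^ (i + r - n) < q ^ r := Nat.pow_lt_pow_right (by omega) (by omega)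
  have hRA : q ^ r < q ^ n := Nat.pow_lt_pow_right (by omega) (by omega)
  have hA2 : 2 ≤ q ^ n := by
    have := Nat.le_self_pow (show n ≠ 0 by omega) q; omega
  have hI1 : 1 ≤ q ^ i := Nat.one_le_pow _ _ (by omega)
  have key : (q ^ i - 1) * q ^ r =
      (q ^ n - 1 - (q ^ r - q ^ (i + r - n))) + (q ^ (i + r - n) - 1) * (q ^ n - 1) := by
    have hA1 : 1 ≤ q ^ n := by omega
    zify [hI1, hB1, hA1, hRA.le, hBR.le,
      show q ^ r - q ^ (i + r - n) ≤ q ^ n - 1 by omega] at hbc ⊢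
    linear_combination hbc
  rw [key, Nat.add_mul_mod_self_right]
  apply Nat.mod_eq_of_lt
  omega

lemma inj_lt (q n i r1 r2 : ℕ) (hq : 2 ≤ q) (hi : 1 ≤ i) (hin : i < n)
    (h12 : r1 < r2) (h2 : r2 < n)
    (heq : (q ^ i - 1) * q ^ r1 % (q ^ n - 1) = (q ^ i - 1) * q ^ r2 % (q ^ n - 1)) :
    False := by
  have hq1 : 1 < q := by omega
  by_cases hA : i + r2 ≤ n
  · rw [valA q n i r1 hq hi hin (by omega), valA q n i r2 hq hi hin hA] at heq
    have e1 : q ^ (i + r1) = q ^ i * q ^ r1 := pow_add q i r1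
    have e2 : q ^ (i + r2) = q ^ i * q ^ r2 := pow_add q i r2
    have hp1 : q ^ r1 < q ^ r2 := Nat.pow_lt_pow_right hq1 h12
    have hle1 : q ^ r1 ≤ q ^ (i + r1) := Nat.pow_le_pow_right (by omega) (by omega)
    have hle2 : q ^ r2 ≤ q ^ (i + r2) := Nat.pow_le_pow_right (by omega) (by omega)
    have hI : 2 ≤ q ^ i := by
      have := Nat.le_self_pow (show i ≠ 0 by omega) q; omega
    rw [e1] at heq hle1
    rw [e2] at heq hle2
    zify [hle1, hle2] at heq
    zify at hp1 hI
    nlinarith [heq, hp1, hI]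
  · by_cases hB : n < i + r1
    · rw [valB q n i r1 hq hin (by omega) hB, valB q n i r2 hq hin h2 (by omega)] at heq
      have hB1 : q ^ (i + r1 - n) < q ^ (i + r2 - n) := Nat.pow_lt_pow_right hq1 (by omega)
      have hBR1 : q ^ (i + r1 - n) < q ^ r1 := Nat.pow_lt_pow_right hq1 (by omega)
      have hBR2 : q ^ (i + r2 - n) < q ^ r2 := Nat.pow_lt_pow_right hq1 (by omega)
      have hRA1 : q ^ r1 < q ^ n := Nat.pow_lt_pow_right hq1 (by omega)
      have hRA2 : q ^ r2 < q ^ n := Nat.pow_lt_pow_right hq1 (by omega)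
      have heq2 : q ^ r1 - q ^ (i + r1 - n) = q ^ r2 - q ^ (i + r2 - n) := by omega
      -- q^r = q^(i+r-n) * q^(n-i)
      have f1 : q ^ r1 = q ^ (i + r1 - n) * q ^ (n - i) := by
        rw [← pow_add]; congr 1; omega
      have f2 : q ^ r2 = q ^ (i + r2 - n) * q ^ (n - i) := by
        rw [← pow_add]; congr 1; omega
      have hC : 2 ≤ q ^ (n - i) := by
        have := Nat.le_self_pow (show n - i ≠ 0 by omega) q; omega
      rw [f1, f2] at heq2
      zify [Nat.le_mul_of_pos_right _ (show 0 < q ^ (n-i) by omega)] at heq2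
      zify at hB1 hC
      nlinarith [heq2, hB1, hC]
    · -- i + r1 ≤ n < i + r2
      rw [valA q n i r1 hq hi hin (by omega), valB q n i r2 hq hin h2 (by omega)] at heq
      have hBR2 : q ^ (i + r2 - n) < q ^ r2 := Nat.pow_lt_pow_right hq1 (by omega)
      have hRA2 : q ^ r2 ≤ q ^ (n - 1) := Nat.pow_le_pow_right (by omega) (by omega)
      have hRA2' : q ^ r2 < q ^ n := Nat.pow_lt_pow_right hq1 (by omega)
      have hB2 : 2 ≤ q ^ (i + r2 - n) := by
        have := Nat.le_self_pow (show i + r2 - n ≠ 0 by omega) q; omega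
      have h5 : q ^ (n - 1) * q = q ^ n := by rw [← pow_succ]; congr 1; omega
      have h6 : q ^ (n - 1) * 2 ≤ q ^ (n - 1) * q := Nat.mul_le_mul_left _ hq
      rcases Nat.eq_zero_or_pos r1 with rfl | hr1
      · have hIle : q ^ i ≤ q ^ (n - 1) := Nat.pow_le_pow_right (by omega) (by omega)
        simp only [Nat.add_zero, pow_zero] at heq
        omega
      · -- divisibility by q argument
        have d1 : q ∣ q ^ (i + r1) - q ^ r1 :=
          Nat.dvd_sub (dvd_pow_self q (by omega)) (dvd_pow_self q (by omega))
        have d2 : q ∣ (q ^ n - q ^ r2) + q ^ (i + r2 - n) :=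
          dvd_add (Nat.dvd_sub (dvd_pow_self q (by omega)) (dvd_pow_self q (by omega)))
            (dvd_pow_self q (by omega))
        have e : (q ^ n - 1 - (q ^ r2 - q ^ (i + r2 - n))) + 1 =
            (q ^ n - q ^ r2) + q ^ (i + r2 - n) := by omega
        rw [heq] at d1
        have d3 : q ∣ 1 := by
          have := Nat.dvd_sub (e ▸ d2) d1
          simpa using this
        have := Nat.le_of_dvd one_pos d3
        omega

lemma min_mem (q n i u : ℕ) (hq : 2 ≤ q) (hin : i < n) (hn : 2 ≤ n) :
    q ^ i - 1 ≤ (q ^ i - 1) * q ^ u % (q ^ n - 1) := by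
  rcases Nat.eq_zero_or_pos i with rfl | hi
  · simp
  rw [red q n (by omega) (by omega)]
  have hrn : u % n < n := Nat.mod_lt _ (by omega)
  set r := u % n with hr
  by_cases hA : i + r ≤ n
  · rw [valA q n i r hq hi hin hA]
    have e : q ^ (i + r) = q ^ i * q ^ r := pow_add q i r
    have h1 : 1 ≤ q ^ i := Nat.one_le_pow _ _ (by omega)
    have h2 : 1 ≤ q ^ r := Nat.one_le_pow _ _ (by omega)
    have key : q ^ i + q ^ r ≤ q ^ i * q ^ r + 1 := by nlinarith
    omega
  · rw [valB q n i r hq hin hrn (by omega)]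
    have hRA : q ^ r ≤ q ^ (n - 1) := Nat.pow_le_pow_right (by omega) (by omega)
    have hB1 : 1 ≤ q ^ (i + r - n) := Nat.one_le_pow _ _ (by omega)
    have hIle : q ^ i ≤ q ^ (n - 1) := Nat.pow_le_pow_right (by omega) (by omega)
    have h5 : q ^ (n - 1) * q = q ^ n := by rw [← pow_succ]; congr 1; omega
    have h6 : q ^ (n - 1) * 2 ≤ q ^ (n - 1) * q := Nat.mul_le_mul_left _ hq
    omega

lemma coset_subset (q n i i' x : ℕ) (hq : 1 ≤ q) (hn : 0 < n)
    (hx : ∃ a, x = (q ^ i - 1) * q ^ a % (q ^ n - 1))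
    (hx' : ∃ b, x = (q ^ i' - 1) * q ^ b % (q ^ n - 1)) :
    {k : ℕ | ∃ u : ℕ, k = (q ^ i - 1) * q ^ u % (q ^ n - 1)} ⊆
    {k : ℕ | ∃ u : ℕ, k = (q ^ i' - 1) * q ^ u % (q ^ n - 1)} := by
  obtain ⟨a, ha⟩ := hx
  obtain ⟨b, hb⟩ := hx'
  rintro y ⟨u, rfl⟩
  refine ⟨b + (u + (a * n - a)), ?_⟩
  have hle : a ≤ a * n := Nat.le_mul_of_pos_right a hn
  show (q ^ i - 1) * q ^ u % (q ^ n - 1) = (q ^ i' - 1) * q ^ (b + (u + (a * n - a))) % (q ^ n - 1)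
  have step1 : (q ^ i' - 1) * q ^ (b + (u + (a * n - a)))
      = ((q ^ i' - 1) * q ^ b) * q ^ (u + (a * n - a)) := by
    rw [pow_add, ← mul_assoc]
  have step2 : ((q ^ i' - 1) * q ^ b) * q ^ (u + (a * n - a)) ≡
      x * q ^ (u + (a * n - a)) [MOD q ^ n - 1] := by
    have : (q ^ i' - 1) * q ^ b ≡ x [MOD q ^ n - 1] := by
      rw [hb]; exact (Nat.mod_modEq _ _).symm
    exact this.mul_right _
  have step3 : x * q ^ (u + (a * n - a)) ≡
      ((q ^ i - 1) * q ^ a) * q ^ (u + (a * n - a)) [MOD q ^ n - 1] := by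
    have : x ≡ (q ^ i - 1) * q ^ a [MOD q ^ n - 1] := by
      rw [ha]; exact Nat.mod_modEq _ _
    exact this.mul_right _
  have step4 : ((q ^ i - 1) * q ^ a) * q ^ (u + (a * n - a))
      = (q ^ i - 1) * q ^ u * (q ^ n) ^ a := by
    rw [mul_assoc, mul_assoc, ← pow_add, ← pow_mul, ← pow_add]
    congr 2
    set m := a * n with hm
    set m' := n * a with hm'
    have : m = m' := by rw [hm, hm', Nat.mul_comm]
    omega
  have step5 : (q ^ i - 1) * q ^ u * (q ^ n) ^ a ≡
      (q ^ i - 1) * q ^ u * 1 ^ a [MOD q ^ n - 1] :=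
    ((powN q n hq).pow a).mul_left _
  have chain : (q ^ i' - 1) * q ^ (b + (u + (a * n - a))) ≡
      (q ^ i - 1) * q ^ u [MOD q ^ n - 1] := by
    calc (q ^ i' - 1) * q ^ (b + (u + (a * n - a)))
        = ((q ^ i' - 1) * q ^ b) * q ^ (u + (a * n - a)) := step1
      _ ≡ x * q ^ (u + (a * n - a)) [MOD q ^ n - 1] := step2
      _ ≡ ((q ^ i - 1) * q ^ a) * q ^ (u + (a * n - a)) [MOD q ^ n - 1] := step3
      _ = (q ^ i - 1) * q ^ u * (q ^ n) ^ a := step4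
      _ ≡ (q ^ i - 1) * q ^ u * 1 ^ a [MOD q ^ n - 1] := step5
      _ = (q ^ i - 1) * q ^ u := by rw [one_pow, mul_one]
  exact chain.symm

end Stmt12Aux

/-- the integers `0 = q^0−1, q−1, q^2−1, …, q^{n−1}−1` lie in pairwise
distinct `q`-cyclotomic cosets modulo `q^n−1`; the coset of `0` has size `1`, each coset
of `q^i−1` (`1 ≤ i ≤ n−1`) has size `n`, and the union of the cosets has cardinality
`n² − n + 1`. -/
theorem stmt_12 (q n : ℕ) (hq : ∃ p k : ℕ, p.Prime ∧ 0 < k ∧ q = p ^ k) (hn : 2 ≤ n) :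
    (∀ i i' : ℕ, i < n → i' < n → i ≠ i' →
        {k : ℕ | ∃ u : ℕ, k = (q ^ i - 1) * q ^ u % (q ^ n - 1)} ≠
        {k : ℕ | ∃ u : ℕ, k = (q ^ i' - 1) * q ^ u % (q ^ n - 1)}) ∧
    ({k : ℕ | ∃ u : ℕ, k = (q ^ 0 - 1) * q ^ u % (q ^ n - 1)}).ncard = 1 ∧
    (∀ i : ℕ, 1 ≤ i → i < n →
        ({k : ℕ | ∃ u : ℕ, k = (q ^ i - 1) * q ^ u % (q ^ n - 1)}).ncard = n) ∧
    (⋃ i ∈ Finset.range n,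
        {k : ℕ | ∃ u : ℕ, k = (q ^ i - 1) * q ^ u % (q ^ n - 1)}).ncard
      = n ^ 2 - n + 1 := by
  have hq2 : 2 ≤ q := by
    obtain ⟨p, k, hp, hk, rfl⟩ := hq
    calc 2 ≤ p := hp.two_le
      _ ≤ p ^ k := Nat.le_self_pow (by omega) p
  clear hq
  -- sets equal finsets
  have hST : ∀ i : ℕ, {k : ℕ | ∃ u : ℕ, k = (q ^ i - 1) * q ^ u % (q ^ n - 1)} =
      ↑((Finset.range n).image fun r => (q ^ i - 1) * q ^ r % (q ^ n - 1)) := by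
    intro i
    ext x
    simp only [Set.mem_setOf_eq, Finset.coe_image, Set.mem_image, Finset.mem_coe,
      Finset.mem_range]
    constructor
    · rintro ⟨u, rfl⟩
      exact ⟨u % n, Nat.mod_lt _ (by omega), (Stmt12Aux.red q n (by omega) (by omega) _ u).symm⟩
    · rintro ⟨r, _, h⟩
      exact ⟨r, h.symm⟩
  have hmem : ∀ i : ℕ, i < n →
      (q ^ i - 1) ∈ {k : ℕ | ∃ u : ℕ, k = (q ^ i - 1) * q ^ u % (q ^ n - 1)} := by
    intro i hi
    refine ⟨0, ?_⟩
    rw [pow_zero, mul_one, Nat.mod_eq_of_lt]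
    have h0 := Nat.pow_lt_pow_right (show 1 < q by omega) hi
    have h1 : 1 ≤ q ^ i := Nat.one_le_pow _ _ (by omega)
    omega
  have hdist : ∀ i i' : ℕ, i < n → i' < n → i ≠ i' →
      {k : ℕ | ∃ u : ℕ, k = (q ^ i - 1) * q ^ u % (q ^ n - 1)} ≠
      {k : ℕ | ∃ u : ℕ, k = (q ^ i' - 1) * q ^ u % (q ^ n - 1)} := by
    intro i i' hi hi' hne heq
    apply hne
    have m1 := hmem i hi
    have m2 := hmem i' hi'
    rw [heq] at m1
    rw [← heq] at m2
    obtain ⟨u, hu⟩ := m1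
    obtain ⟨u', hu'⟩ := m2
    have l1 := Stmt12Aux.min_mem q n i' u hq2 hi' hn
    have l2 := Stmt12Aux.min_mem q n i u' hq2 hi hn
    rw [← hu] at l1
    rw [← hu'] at l2
    have h1 : 1 ≤ q ^ i := Nat.one_le_pow _ _ (by omega)
    have h2 : 1 ≤ q ^ i' := Nat.one_le_pow _ _ (by omega)
    have l1' : q ^ i' - 1 ≤ q ^ i - 1 := l1
    have l2' : q ^ i - 1 ≤ q ^ i' - 1 := l2
    exact Nat.pow_right_injective hq2 (by show q ^ i = q ^ i'; omega)
  have hcard : ∀ i : ℕ, 1 ≤ i → i < n →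
      ((Finset.range n).image fun r => (q ^ i - 1) * q ^ r % (q ^ n - 1)).card = n := by
    intro i h1 h2
    rw [Finset.card_image_of_injOn, Finset.card_range]
    intro r1 hr1 r2 hr2 hrr
    simp only [Finset.coe_range, Set.mem_Iio] at hr1 hr2
    by_contra hne
    rcases Nat.lt_or_ge r1 r2 with h | h
    · exact Stmt12Aux.inj_lt q n i r1 r2 hq2 h1 h2 h hr2 hrr
    · exact Stmt12Aux.inj_lt q n i r2 r1 hq2 h1 h2 (by omega) hr1 hrr.symm
  have hcard0 : ((Finset.range n).image fun r => (q ^ 0 - 1) * q ^ r % (q ^ n - 1)).card = 1 := by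
    have he : ((Finset.range n).image fun r => (q ^ 0 - 1) * q ^ r % (q ^ n - 1)) = {0} := by
      ext x
      simp only [pow_zero, Nat.sub_self, zero_mul, Nat.zero_mod, Finset.mem_image,
        Finset.mem_range, Finset.mem_singleton]
      constructor
      · rintro ⟨r, _, rfl⟩; rfl
      · rintro rfl; exact ⟨0, by omega, rfl⟩
    rw [he]
    rfl
  have hdisj : ∀ x ∈ Finset.range n, ∀ y ∈ Finset.range n, x ≠ y →
      Disjoint ((Finset.range n).image fun r => (q ^ x - 1) * q ^ r % (q ^ n - 1))
        ((Finset.range n).image fun r => (q ^ y - 1) * q ^ r % (q ^ n - 1)) := by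
    intro x hx y hy hxy
    rw [Finset.disjoint_left]
    intro a hax hay
    simp only [Finset.mem_image, Finset.mem_range] at hax hay
    obtain ⟨r, _, hr⟩ := hax
    obtain ⟨r', _, hr'⟩ := hay
    refine hdist x y (Finset.mem_range.mp hx) (Finset.mem_range.mp hy) hxy ?_
    apply Set.Subset.antisymm
    · exact Stmt12Aux.coset_subset q n x y a (by omega) (by omega) ⟨r, hr.symm⟩ ⟨r', hr'.symm⟩
    · exact Stmt12Aux.coset_subset q n y x a (by omega) (by omega) ⟨r', hr'.symm⟩ ⟨r, hr.symm⟩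
  refine ⟨hdist, ?_, ?_, ?_⟩
  · rw [hST 0, Set.ncard_coe_finset, hcard0]
  · intro i h1 h2
    rw [hST i, Set.ncard_coe_finset, hcard i h1 h2]
  · have hUnion : (⋃ i ∈ Finset.range n,
        {k : ℕ | ∃ u : ℕ, k = (q ^ i - 1) * q ^ u % (q ^ n - 1)}) =
        ↑((Finset.range n).biUnion fun i =>
          (Finset.range n).image fun r => (q ^ i - 1) * q ^ r % (q ^ n - 1)) := by
      ext x
      simp only [Set.mem_iUnion, Finset.coe_biUnion, Finset.mem_coe, hST, Finset.coe_image,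
        Set.mem_image, Finset.mem_range]
      try tauto
    rw [hUnion, Set.ncard_coe_finset, Finset.card_biUnion hdisj]
    obtain ⟨m, rfl⟩ : ∃ m, n = m + 1 := ⟨n - 1, by omega⟩
    rw [Finset.sum_range_succ']
    have e0 : (Finset.image (fun r => (q ^ 0 - 1) * q ^ r % (q ^ (m + 1) - 1))
        (Finset.range (m + 1))).card = 1 := hcard0
    rw [e0, Finset.sum_congr rfl fun i hi => hcard (i + 1) (by omega)
      (by simp only [Finset.mem_range] at hi; omega)]
    rw [Finset.sum_const, smul_eq_mul, Finset.card_range]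
    have e : (m + 1) ^ 2 = m * (m + 1) + (m + 1) := by ring
    generalize hP : m * (m + 1) = P at e ⊢
    generalize hQ : (m + 1) ^ 2 = Q at e ⊢
    omega
end

section
/- Let q be a prime power, n ≥ 1, and let a_0, a_1, …, a_{n−1} ∈ F_{q^n}. If there exists u ∈ F_q such that Tr_{q^n/q}(a_0 + a_1 x^{q−1} + a_2 x^{q^2−1} + ⋯ + a_{n−1} x^{q^{n−1}−1}) = u for every nonzero x ∈ F_{q^n}, then a_1 = a_2 = ⋯ = a_{n−1} = 0 and Tr_{q^n/q}(a_0) = u. Consequently, the F_q-vector space of functions F_{q^n}∖{0} → F_q of the form x ↦ Tr_{q^n/q}(a_0 + Σ_{i=1}^{n−1} a_i x^{q^i−1}), with a_0, …, a_{n−1} ranging over F_{q^n}, has dimension n^2 − n + 1 over F_q. -/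
/-!
Multiplying `Tr(∑ aᵢ x^(q^i - 1)) = u` by `x^(q^(n-1))` and reducing exponents with
`x^(q^n) = x` gives an identity between polynomial functions of degree `< q^n` on `E`, hence an
identity of polynomials. The monomial `x^(q^i + q^(n-1) - 1)` contributed by `aᵢ` (with `j = 0`)
occurs nowhere else, since `q^m + 1 = q^i + q^j` with `i ≥ 1` forces `j = 0`; so `aᵢ = 0` for
`i ≥ 1`, and `x = 1` gives `Tr a₀ = u`.

For the count, `a ↦ (x ↦ Tr(∑ aᵢ x^(q^i - 1)))` is additive on `E^n`, and by the first part its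
kernel is `{(c, 0, …, 0) : Tr c = 0}`. The trace has at most `q^(n-1)` zeros (a polynomial of that
degree) and at most `q` values (they satisfy `c^q = c`), so it has exactly `q^(n-1)` zeros, and the
image has `q^(n²) / q^(n-1)` elements.
-/

open Finset Polynomial

theorem Nat.eq_and_eq_zero_of_pow_add_one_eq_pow_add_pow {q m i j : ℕ} (hq : 2 ≤ q) (hi : i ≠ 0)
    (h : q ^ m + 1 = q ^ i + q ^ j) : m = i ∧ j = 0 := by
  obtain _ | j := j
  · exact ⟨Nat.pow_right_injective hq (by simpa using h), rfl⟩
  have hqi : q ≤ q ^ i := Nat.le_self_pow hi q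
  have hqj : q ≤ q ^ (j + 1) := Nat.le_self_pow j.succ_ne_zero q
  obtain _ | m := m
  · rw [pow_zero] at h
    omega
  have hdvd : q ∣ q ^ (m + 1) + 1 :=
    h ▸ dvd_add (dvd_pow_self q hi) (dvd_pow_self q j.succ_ne_zero)
  have := Nat.le_of_dvd one_pos ((Nat.dvd_add_right (dvd_pow_self q m.succ_ne_zero)).mp hdvd)
  omega

theorem Fin.sum_univ_eq_add_sum_Icc {M : Type*} [AddCommMonoid M] {n : ℕ} (hn : 0 < n)
    (f : ℕ → M) : ∑ i : Fin n, f i = f 0 + ∑ i ∈ Icc 1 (n - 1), f i := by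
  rw [Fin.sum_univ_eq_sum_range f, ← sum_insert (by simp)]
  congr
  ext i
  simp only [mem_range, mem_insert, mem_Icc]
  omega

/-- The exponent of `x` in `(x ^ (q ^ i - 1)) ^ q ^ j * x ^ q ^ (n - 1)`, once `x ^ q ^ n = x`
has been used to bring it below `q ^ n`. -/
def traceExponent (q n i j : ℕ) : ℕ := q ^ ((i + j) % n) + (q ^ (n - 1) - q ^ j)

section TraceExponent

variable {q n i j : ℕ}

theorem traceExponent_lt (hq : 2 ≤ q) (hj : j < n) : traceExponent q n i j < q ^ n := by
  have hmod : q ^ ((i + j) % n) ≤ q ^ (n - 1) :=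
    Nat.pow_le_pow_right (by omega) (by have := Nat.mod_lt (i + j) (show 0 < n by omega); omega)
  have hqn : q ^ n = q ^ (n - 1) * q := by rw [← pow_succ]; congr; omega
  have := Nat.mul_le_mul_left (q ^ (n - 1)) hq
  have := Nat.pow_le_pow_right (by omega : 0 < q) (by omega : j ≤ n - 1)
  have := Nat.one_le_pow j q (by omega)
  unfold traceExponent
  omega

theorem traceExponent_zero_ne (hq : 2 ≤ q) (hi : i ≠ 0) (hin : i < n) :
    traceExponent q n i 0 ≠ q ^ (n - 1) := by
  have := Nat.le_self_pow hi q
  have := Nat.one_le_pow (n - 1) q (by omega)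
  simp only [traceExponent, add_zero, Nat.mod_eq_of_lt hin, pow_zero]
  omega

theorem eq_of_traceExponent_eq {i₀ : ℕ} (hq : 2 ≤ q) (hi₀ : i₀ ≠ 0) (hi₀n : i₀ < n) (hin : i < n)
    (hjn : j < n) (h : traceExponent q n i j = traceExponent q n i₀ 0) : i = i₀ ∧ j = 0 := by
  have := Nat.pow_le_pow_right (by omega : 0 < q) (by omega : j ≤ n - 1)
  have := Nat.one_le_pow j q (by omega)
  simp only [traceExponent, add_zero, Nat.mod_eq_of_lt hi₀n, pow_zero] at h
  obtain ⟨hmod, rfl⟩ :=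
    Nat.eq_and_eq_zero_of_pow_add_one_eq_pow_add_pow (m := (i + j) % n) (j := j) hq hi₀ (by omega)
  rw [add_zero, Nat.mod_eq_of_lt hin] at hmod
  exact ⟨hmod, rfl⟩

end TraceExponent

theorem Polynomial.ncard_le_natDegree_of_forall_eval_eq_zero {K : Type*} [Field K] {P : K[X]}
    (hP : P ≠ 0) {S : Set K} (hS : ∀ x ∈ S, P.eval x = 0) : S.ncard ≤ P.natDegree := by
  classical
  calc S.ncard ≤ (P.roots.toFinset : Set K).ncard :=
        Set.ncard_le_ncard (fun x hx => by simpa [hP] using hS x hx) (Finset.finite_toSet _)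
    _ ≤ P.natDegree := by
        rw [Set.ncard_coe_finset]
        exact (Multiset.toFinset_card_le _).trans P.card_roots'

/-- Distinct monomials of degree `< |K|` are linearly independent as functions on `K`. -/
theorem eq_zero_of_forall_sum_mul_pow_eq {K ι : Type*} [Field K] [Fintype K]
    {s : Finset ι} {c : ι → K} {d : ι → ℕ} {c₀ : K} {d₀ : ℕ}
    (hd : ∀ k ∈ s, d k < Fintype.card K) (hd₀ : d₀ < Fintype.card K)
    (h : ∀ x, ∑ k ∈ s, c k * x ^ d k = c₀ * x ^ d₀) {k₀ : ι} (hk₀ : k₀ ∈ s) (hne : d k₀ ≠ d₀)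
    (huniq : ∀ k ∈ s, d k = d k₀ → k = k₀) : c k₀ = 0 := by
  classical
  set P : K[X] := ∑ k ∈ s, C (c k) * X ^ d k - C c₀ * X ^ d₀
  have hdeg : P.natDegree < Fintype.card K := by
    refine (natDegree_sub_le _ _).trans_lt (max_lt ?_ ((natDegree_C_mul_X_pow_le _ _).trans_lt hd₀))
    have := Fintype.card_pos (α := K)
    refine Nat.lt_of_le_sub_one this (natDegree_sum_le_of_forall_le _ _ fun k hk => ?_)
    exact (natDegree_C_mul_X_pow_le _ _).trans (Nat.le_sub_one_of_lt (hd k hk))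
  have hP : P = 0 :=
    eq_zero_of_natDegree_lt_card_of_eval_eq_zero' P univ
      (fun x _ => by simp [P, eval_finsetSum, h x]) (by rwa [card_univ])
  have hcoeff := congrArg (coeff · (d k₀)) hP
  simp only [P, coeff_sub, finsetSum_coeff, coeff_C_mul_X_pow, if_neg hne, sub_zero,
    coeff_zero] at hcoeff
  rwa [sum_eq_single_of_mem k₀ hk₀ fun k hk hne' => if_neg fun h => hne' (huniq k hk h.symm),
    if_pos rfl] at hcoeff

/-- For `Fintype.card E = q ^ n` this is `Tr_{q^n/q}`. -/
def frobeniusTrace {E : Type*} [CommSemiring E] (q n : ℕ) (y : E) : E := ∑ j ∈ range n, y ^ q ^ j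

section FiniteField

variable {E : Type*} [Field E] [Fintype E] {q n : ℕ}

theorem two_le_of_card_eq_pow (hn : 0 < n) (hE : Fintype.card E = q ^ n) : 2 ≤ q := by
  have := Fintype.one_lt_card (α := E)
  rw [hE, one_lt_pow_iff hn.ne'] at this
  exact this

theorem exists_ringChar_pow_eq_of_card_eq_pow (hn : 0 < n) (hE : Fintype.card E = q ^ n) :
    ∃ k, q = ringChar E ^ k := by
  obtain ⟨m, hp, hm⟩ := FiniteField.card E (ringChar E)
  have hdvd : q ∣ ringChar E ^ (m : ℕ) := hm ▸ hE ▸ dvd_pow_self q hn.ne'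
  obtain ⟨k, -, hk⟩ := (Nat.dvd_prime_pow hp).mp hdvd
  exact ⟨k, hk⟩

theorem add_pow_pow_of_card_eq_pow (hn : 0 < n) (hE : Fintype.card E = q ^ n) (x y : E) (j : ℕ) :
    (x + y) ^ q ^ j = x ^ q ^ j + y ^ q ^ j := by
  obtain ⟨k, rfl⟩ := exists_ringChar_pow_eq_of_card_eq_pow hn hE
  have : Fact (ringChar E).Prime := ⟨CharP.char_is_prime E _⟩
  rw [← pow_mul, add_pow_char_pow]

theorem sum_pow_pow_of_card_eq_pow (hn : 0 < n) (hE : Fintype.card E = q ^ n) {ι : Type*}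
    (s : Finset ι) (f : ι → E) (j : ℕ) : (∑ i ∈ s, f i) ^ q ^ j = ∑ i ∈ s, f i ^ q ^ j := by
  obtain ⟨k, rfl⟩ := exists_ringChar_pow_eq_of_card_eq_pow hn hE
  have : Fact (ringChar E).Prime := ⟨CharP.char_is_prime E _⟩
  rw [← pow_mul, sum_pow_char_pow]

theorem pow_pow_mod_of_card_eq_pow (hE : Fintype.card E = q ^ n) (x : E) (m : ℕ) :
    x ^ q ^ m = x ^ q ^ (m % n) := by
  conv_lhs => rw [← Nat.div_add_mod m n, pow_add, pow_mul, pow_mul, ← hE,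
    FiniteField.pow_card_pow]

theorem frobeniusTrace_add (hn : 0 < n) (hE : Fintype.card E = q ^ n) (y z : E) :
    frobeniusTrace q n (y + z) = frobeniusTrace q n y + frobeniusTrace q n z := by
  simp only [frobeniusTrace, add_pow_pow_of_card_eq_pow hn hE, sum_add_distrib]

theorem frobeniusTrace_pow (hn : 0 < n) (hE : Fintype.card E = q ^ n) (y : E) :
    frobeniusTrace q n y ^ q = frobeniusTrace q n y := by
  have hshift : frobeniusTrace q n y ^ q = ∑ j ∈ range n, y ^ q ^ (j + 1) := by
    rw [← pow_one q, frobeniusTrace, sum_pow_pow_of_card_eq_pow hn hE, pow_one]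
    simp only [← pow_mul, ← pow_succ]
  have hcycle := (sum_range_succ' (fun j => y ^ q ^ j) n).symm.trans (sum_range_succ _ n)
  rw [pow_zero, pow_one, ← hE, FiniteField.pow_card] at hcycle
  rw [hshift, frobeniusTrace, add_right_cancel hcycle]

def frobeniusTraceHom (hn : 0 < n) (hE : Fintype.card E = q ^ n) : E →+ E :=
  AddMonoidHom.mk' (frobeniusTrace q n) (frobeniusTrace_add hn hE)

theorem ncard_setOf_frobeniusTrace_eq_zero_le (hn : 0 < n) (hE : Fintype.card E = q ^ n) :
    {y : E | frobeniusTrace q n y = 0}.ncard ≤ q ^ (n - 1) := by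
  have hq := two_le_of_card_eq_pow hn hE
  set Q : E[X] := ∑ j ∈ range n, X ^ q ^ j
  have hcoeff : Q.coeff (q ^ (n - 1)) = 1 := by
    rw [finsetSum_coeff, sum_eq_single_of_mem (n - 1) (mem_range.mpr (by omega)), coeff_X_pow,
      if_pos rfl]
    exact fun j _ hj => by rw [coeff_X_pow, if_neg fun h => hj (Nat.pow_right_injective hq h.symm)]
  have hQ : Q ≠ 0 := fun h => by simp [h] at hcoeff
  refine (ncard_le_natDegree_of_forall_eval_eq_zero hQ fun y hy => ?_).trans ?_
  · simpa [Q, eval_finsetSum, frobeniusTrace] using hy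
  · refine natDegree_sum_le_of_forall_le _ _ fun j hj => ?_
    rw [natDegree_X_pow]
    exact Nat.pow_le_pow_right (by omega) (by have := mem_range.mp hj; omega)

theorem ncard_range_frobeniusTrace_le (hn : 0 < n) (hE : Fintype.card E = q ^ n) :
    (Set.range (frobeniusTrace (E := E) q n)).ncard ≤ q := by
  have hq := two_le_of_card_eq_pow hn hE
  have hdeg := FiniteField.X_pow_card_sub_X_natDegree_eq E (by omega : 1 < q)
  refine (ncard_le_natDegree_of_forall_eval_eq_zero (fun h => by simp [h] at hdeg; omega) ?_).trans
    hdeg.le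
  rintro _ ⟨y, rfl⟩
  simp [frobeniusTrace_pow hn hE]

theorem ncard_setOf_frobeniusTrace_eq_zero (hn : 0 < n) (hE : Fintype.card E = q ^ n) :
    {y : E | frobeniusTrace q n y = 0}.ncard = q ^ (n - 1) := by
  have hq := two_le_of_card_eq_pow hn hE
  have hcard := (frobeniusTraceHom hn hE).ker.card_mul_index
  rw [AddSubgroup.index_ker, Nat.card_eq_fintype_card (α := E), hE] at hcard
  have hker : Nat.card (frobeniusTraceHom hn hE).ker = {y : E | frobeniusTrace q n y = 0}.ncard :=
    Nat.card_coe_set_eq _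
  have hrange : Nat.card (frobeniusTraceHom hn hE).range ≤ q :=
    (Nat.card_coe_set_eq _).trans_le (ncard_range_frobeniusTrace_le hn hE)
  have hqn : q ^ n = q * q ^ (n - 1) := by rw [← pow_succ']; congr; omega
  refine le_antisymm (ncard_setOf_frobeniusTrace_eq_zero_le hn hE) ?_
  rw [← hker]
  nlinarith

theorem pow_pow_sub_one_pow_mul_eq_pow_traceExponent (hn : 0 < n) (hE : Fintype.card E = q ^ n)
    (x : E) (i : ℕ) {j : ℕ} (hj : j < n) :
    (x ^ (q ^ i - 1)) ^ q ^ j * x ^ q ^ (n - 1) = x ^ traceExponent q n i j := by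
  have hq := two_le_of_card_eq_pow hn hE
  have := Nat.pow_le_pow_right (by omega : 0 < q) (by omega : j ≤ n - 1)
  have := Nat.pow_le_pow_right (by omega : 0 < q) (by omega : j ≤ i + j)
  have := Nat.one_le_pow i q (by omega)
  have hexp : (q ^ i - 1) * q ^ j + q ^ (n - 1) = q ^ (i + j) + (q ^ (n - 1) - q ^ j) := by
    rw [Nat.sub_mul, one_mul, ← pow_add]
    omega
  rw [← pow_mul, ← pow_add, hexp, pow_add, pow_pow_mod_of_card_eq_pow hE, ← pow_add]
  rfl

theorem frobeniusTrace_sum_mul_pow_eq (hn : 0 < n) (hE : Fintype.card E = q ^ n) (a : Fin n → E)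
    (x : E) : frobeniusTrace q n (∑ i, a i * x ^ (q ^ (i : ℕ) - 1)) * x ^ q ^ (n - 1) =
      ∑ ji ∈ range n ×ˢ univ, a ji.2 ^ q ^ ji.1 * x ^ traceExponent q n ji.2 ji.1 := by
  rw [frobeniusTrace, sum_mul, sum_product]
  refine sum_congr rfl fun j hj => ?_
  rw [sum_pow_pow_of_card_eq_pow hn hE, sum_mul]
  refine sum_congr rfl fun i _ => ?_
  rw [mul_pow, mul_assoc,
    pow_pow_sub_one_pow_mul_eq_pow_traceExponent hn hE x i (mem_range.mp hj)]

theorem eq_zero_of_forall_frobeniusTrace_sum_eq (hn : 0 < n) (hE : Fintype.card E = q ^ n)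
    {a : Fin n → E} {u : E}
    (h : ∀ x ≠ 0, frobeniusTrace q n (∑ i, a i * x ^ (q ^ (i : ℕ) - 1)) = u)
    {i₀ : Fin n} (hi₀ : (i₀ : ℕ) ≠ 0) : a i₀ = 0 := by
  have hq := two_le_of_card_eq_pow hn hE
  have hpoly : ∀ x : E, ∑ ji ∈ range n ×ˢ univ, a ji.2 ^ q ^ ji.1 * x ^ traceExponent q n ji.2 ji.1
      = u * x ^ q ^ (n - 1) := by
    intro x
    rw [← frobeniusTrace_sum_mul_pow_eq hn hE]
    rcases eq_or_ne x 0 with rfl | hx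
    · simp [zero_pow (pow_ne_zero _ (by omega : q ≠ 0))]
    · rw [h x hx]
  have hcoeff := eq_zero_of_forall_sum_mul_pow_eq (k₀ := (0, i₀))
    (fun ji hji => hE ▸ traceExponent_lt hq (mem_range.mp (mem_product.mp hji).1))
    (hE ▸ Nat.pow_lt_pow_right hq (by omega)) hpoly
    (mem_product.mpr ⟨mem_range.mpr hn, mem_univ i₀⟩) (traceExponent_zero_ne hq hi₀ i₀.isLt)
    fun ji hji h => by
      obtain ⟨hi, hj⟩ := eq_of_traceExponent_eq hq hi₀ i₀.isLt ji.2.isLt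
        (mem_range.mp (mem_product.mp hji).1) h
      exact Prod.ext hj (Fin.ext hi)
  simpa using hcoeff

/-- `a ↦ (x ↦ Tr(L(x)/x))` for `L = ∑ aᵢ X^(q^i)`, on functions on `E^×`. -/
def traceQuotientHom (hn : 0 < n) (hE : Fintype.card E = q ^ n) :
    (Fin n → E) →+ ({x : E // x ≠ 0} → E) :=
  AddMonoidHom.mk' (fun a x => frobeniusTrace q n (∑ i, a i * (x : E) ^ (q ^ (i : ℕ) - 1)))
    fun a b => funext fun x => by
      simp only [Pi.add_apply, add_mul, sum_add_distrib, frobeniusTrace_add hn hE]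

theorem traceQuotientHom_single_zero (hn : 0 < n) (hE : Fintype.card E = q ^ n) (c : E) :
    traceQuotientHom hn hE (Pi.single ⟨0, hn⟩ c) = fun _ => frobeniusTrace q n c := by
  funext x
  simp [traceQuotientHom, Pi.single_apply]

theorem coe_ker_traceQuotientHom (hn : 0 < n) (hE : Fintype.card E = q ^ n) :
    ((traceQuotientHom hn hE).ker : Set (Fin n → E)) =
      Pi.single ⟨0, hn⟩ '' {c | frobeniusTrace q n c = 0} := by
  ext a
  simp only [SetLike.mem_coe, AddMonoidHom.mem_ker, Set.mem_image, Set.mem_ofPred_eq]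
  constructor
  · intro ha
    have hsingle : a = Pi.single ⟨0, hn⟩ (a ⟨0, hn⟩) := by
      funext i
      by_cases hi : i = ⟨0, hn⟩
      · simp [hi]
      · rw [Pi.single_eq_of_ne hi]
        exact eq_zero_of_forall_frobeniusTrace_sum_eq hn hE
          (fun x hx => congrFun ha ⟨x, hx⟩) fun h => hi (Fin.ext h)
    refine ⟨a ⟨0, hn⟩, ?_, hsingle.symm⟩
    rw [hsingle, traceQuotientHom_single_zero] at ha
    exact congrFun ha ⟨1, one_ne_zero⟩
  · rintro ⟨c, hc, rfl⟩
    rw [traceQuotientHom_single_zero, hc]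
    rfl

theorem card_ker_traceQuotientHom (hn : 0 < n) (hE : Fintype.card E = q ^ n) :
    Nat.card (traceQuotientHom hn hE).ker = q ^ (n - 1) := by
  rw [← ncard_setOf_frobeniusTrace_eq_zero hn hE,
    ← Set.ncard_image_of_injective _ (Pi.single_injective (M := fun _ : Fin n => E) ⟨0, hn⟩),
    ← coe_ker_traceQuotientHom hn hE]
  exact Nat.card_coe_set_eq _

theorem card_range_traceQuotientHom (hn : 0 < n) (hE : Fintype.card E = q ^ n) :
    Nat.card (traceQuotientHom hn hE).range = q ^ (n ^ 2 - n + 1) := by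
  have hcard := (traceQuotientHom hn hE).ker.card_mul_index
  rw [AddSubgroup.index_ker, Nat.card_eq_fintype_card (α := Fin n → E), Fintype.card_fun, hE,
    Fintype.card_fin, card_ker_traceQuotientHom, ← pow_mul] at hcard
  have hexp : n * n = n - 1 + (n ^ 2 - n + 1) := by
    have : n ≤ n ^ 2 := Nat.le_self_pow two_ne_zero n
    rw [sq] at *
    omega
  rw [hexp, pow_add] at hcard
  exact Nat.eq_of_mul_eq_mul_left (pow_pos (by have := two_le_of_card_eq_pow hn hE; omega) _) hcard

end FiniteField

theorem stmt_13_general (q n : ℕ) (hn : 1 ≤ n)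
    (E : Type*) [Field E] [Fintype E] (hE : Fintype.card E = q ^ n) :
    (∀ (a : ℕ → E) (u : E), u ^ q = u →
      (∀ x : E, x ≠ 0 →
        ∑ j ∈ Finset.range n,
          (a 0 + ∑ i ∈ Finset.Icc 1 (n - 1), a i * x ^ (q ^ i - 1)) ^ q ^ j = u) →
      (∀ i : ℕ, 1 ≤ i → i ≤ n - 1 → a i = 0) ∧
        ∑ j ∈ Finset.range n, (a 0) ^ q ^ j = u) ∧
    Set.ncard {f : {x : E // x ≠ 0} → E | ∃ a : ℕ → E, ∀ x : {x : E // x ≠ 0},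
        f x = ∑ j ∈ Finset.range n,
          (a 0 + ∑ i ∈ Finset.Icc 1 (n - 1), a i * (x : E) ^ (q ^ i - 1)) ^ q ^ j}
      = q ^ (n ^ 2 - n + 1) := by
  have hsum (a : ℕ → E) (x : E) : a 0 + ∑ i ∈ Icc 1 (n - 1), a i * x ^ (q ^ i - 1) =
      ∑ i : Fin n, a i * x ^ (q ^ (i : ℕ) - 1) := by
    simp [Fin.sum_univ_eq_add_sum_Icc hn fun i => a i * x ^ (q ^ i - 1)]
  refine ⟨fun a u _ h => ?_, ?_⟩
  · have ha (i : ℕ) (hi : 1 ≤ i) (hin : i ≤ n - 1) : a i = 0 :=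
      eq_zero_of_forall_frobeniusTrace_sum_eq (a := fun i : Fin n => a i) (i₀ := ⟨i, by omega⟩)
        hn hE (fun x hx => hsum a x ▸ h x hx) (by simp; omega)
    refine ⟨ha, ?_⟩
    have h1 := h 1 one_ne_zero
    rwa [sum_eq_zero (s := Icc 1 (n - 1)) fun i hi => by
      rw [ha i (mem_Icc.mp hi).1 (mem_Icc.mp hi).2, zero_mul], add_zero] at h1
  · refine (congrArg Set.ncard ?_).trans
      ((Nat.card_coe_set_eq _).symm.trans (card_range_traceQuotientHom hn hE))
    rw [AddMonoidHom.coe_range, ← (Fin.val_injective.surjective_comp_right (γ := E)).range_comp]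
    ext f
    simp only [Set.mem_ofPred_eq, Set.mem_range, funext_iff, hsum, eq_comm (a := f _)]
    rfl

/-- if `Tr_{q^n/q}(a_0 + Σ_{i=1}^{n−1} a_i x^{q^i−1}) = u ∈ F_q` for every
nonzero `x ∈ F_{q^n}`, then `a_1 = ⋯ = a_{n−1} = 0` and `Tr_{q^n/q}(a_0) = u`.
Consequently the `F_q`-space of functions `F_{q^n}∖{0} → F_q` of this form has
dimension `n² − n + 1` over `F_q`, i.e. it has exactly `q^{n²−n+1}` elements. -/
theorem stmt_13 (q n : ℕ) (hq : ∃ p k : ℕ, p.Prime ∧ 0 < k ∧ q = p ^ k) (hn : 1 ≤ n)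
    (E : Type*) [Field E] [Fintype E] (hE : Fintype.card E = q ^ n) :
    (∀ (a : ℕ → E) (u : E), u ^ q = u →
      (∀ x : E, x ≠ 0 →
        ∑ j ∈ Finset.range n,
          (a 0 + ∑ i ∈ Finset.Icc 1 (n - 1), a i * x ^ (q ^ i - 1)) ^ q ^ j = u) →
      (∀ i : ℕ, 1 ≤ i → i ≤ n - 1 → a i = 0) ∧
        ∑ j ∈ Finset.range n, (a 0) ^ q ^ j = u) ∧
    Set.ncard {f : {x : E // x ≠ 0} → E | ∃ a : ℕ → E, ∀ x : {x : E // x ≠ 0},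
        f x = ∑ j ∈ Finset.range n,
          (a 0 + ∑ i ∈ Finset.Icc 1 (n - 1), a i * (x : E) ^ (q ^ i - 1)) ^ q ^ j}
      = q ^ (n ^ 2 - n + 1) :=
  stmt_13_general q n hn E hE
end

section
/- Let q be a prime power, n ≥ 1, and let L(X) = Σ_{i=0}^{n-1} a_i X^{q^i} with a_i ∈ F_{q^n}. Then Tr_{q^n/q}(L(x)/x) ≠ 0 for every nonzero x ∈ F_{q^n} if and only if the polynomial congruence [ Σ_{0 ≤ i, j ≤ n−1} a_i^{q^j} X^{q^j(q^i−1)} ]^{q−1} ≡ Tr_{q^n/q}(a_0)^{q−1} + (1 − Tr_{q^n/q}(a_0)^{q−1})·X^{q^n−1} (mod X^{q^n} − X) holds in F_{q^n}[X]. -/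
open Polynomial in
lemma aux_dvd_iff18 (E : Type*) [Field E] [Fintype E] (f : E[X]) :
    (X ^ Fintype.card E - X) ∣ f ↔ ∀ x : E, f.eval x = 0 := by
  constructor
  · rintro ⟨g, rfl⟩ x
    simp [FiniteField.pow_card]
  · intro hroot
    rcases eq_or_ne f 0 with rfl | hf
    · simp
    have hcard : 1 < Fintype.card E := Fintype.one_lt_card
    have hmonic : (X ^ Fintype.card E - X : E[X]).Monic :=
      monic_X_pow_sub (by simpa [degree_X] using (by exact_mod_cast hcard : (1 : WithBot ℕ) < Fintype.card E))
    have hroots := FiniteField.roots_X_pow_card_sub_X E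
    have hdeg := FiniteField.X_pow_card_sub_X_natDegree_eq E hcard
    have hprod : (X ^ Fintype.card E - X : E[X]) =
        ((Finset.univ.val : Multiset E).map fun a => X - C a).prod := by
      conv_lhs => rw [← C_leadingCoeff_mul_prod_multiset_X_sub_C
        (p := (X ^ Fintype.card E - X : E[X])) (by rw [hroots, hdeg]; simp [Finset.card_univ])]
      rw [hmonic.leadingCoeff, C_1, one_mul, hroots]
    rw [hprod, Multiset.prod_X_sub_C_dvd_iff_le_roots hf]
    rw [Multiset.le_iff_subset Finset.univ.nodup]
    intro x _
    rw [mem_roots hf]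
    exact hroot x

open Polynomial in
/-- `Tr_{q^n/q}(L(x)/x) ≠ 0` for every nonzero `x ∈ F_{q^n}` iff
`[Σ_{i,j<n} a_i^{q^j} X^{q^j(q^i−1)}]^{q−1} ≡ Tr(a_0)^{q−1} + (1 − Tr(a_0)^{q−1}) X^{q^n−1}
(mod X^{q^n} − X)` in `F_{q^n}[X]`. -/
theorem stmt_18 (q n : ℕ) (hq : ∃ p k : ℕ, p.Prime ∧ 0 < k ∧ q = p ^ k) (hn : 1 ≤ n)
    (E : Type*) [Field E] [Fintype E] (hE : Fintype.card E = q ^ n)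
    (a : ℕ → E) :
    (∀ x : E, x ≠ 0 →
        ∑ j ∈ Finset.range n, ((∑ i ∈ Finset.range n, a i * x ^ q ^ i) / x) ^ q ^ j ≠ 0)
      ↔ (X ^ q ^ n - X : E[X]) ∣
          ((∑ i ∈ Finset.range n, ∑ j ∈ Finset.range n,
              C ((a i) ^ q ^ j) * X ^ (q ^ j * (q ^ i - 1))) ^ (q - 1)
            - (C ((∑ j ∈ Finset.range n, (a 0) ^ q ^ j) ^ (q - 1))
               + C (1 - (∑ j ∈ Finset.range n, (a 0) ^ q ^ j) ^ (q - 1))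
                 * X ^ (q ^ n - 1))) := by
  obtain ⟨p, k, hp, hk, hqpk⟩ := hq
  have hq2 : 1 < q := hqpk ▸ Nat.one_lt_pow hk.ne' hp.one_lt
  have hchar : ringChar E = p := by
    obtain ⟨m, hp', hcard⟩ := FiniteField.card E (ringChar E)
    have : p ∣ ringChar E := hp.dvd_of_dvd_pow
      (by rw [← hcard, hE, hqpk, ← pow_mul]; exact dvd_pow_self p (by positivity))
    exact ((Nat.prime_dvd_prime_iff_eq hp hp').mp this).symm
  haveI : CharP E p := hchar ▸ ringChar.charP E
  haveI : ExpChar E p := ExpChar.prime hp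
  have hψ : ∀ (j : ℕ) (s : Finset ℕ) (g : ℕ → E),
      (∑ i ∈ s, g i) ^ q ^ j = ∑ i ∈ s, (g i) ^ q ^ j := by
    intro j s g
    have e : p ^ (k * j) = q ^ j := by rw [hqpk, ← pow_mul]
    have := map_sum (iterateFrobenius E p (k * j)) g s
    simp only [iterateFrobenius_def, e] at this
    exact this
  have hu : ∀ u : E, u ^ q ^ n = u := fun u => hE ▸ FiniteField.pow_card u
  have hqn : 1 < q ^ n := Nat.one_lt_pow (by omega) hq2
  have hq1 : q - 1 ≠ 0 := by omega
  have hqn1 : q ^ n - 1 ≠ 0 := by omega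
  have hSq : ∀ u : E, (∑ j ∈ Finset.range n, u ^ q ^ j) ^ q = ∑ j ∈ Finset.range n, u ^ q ^ j := by
    intro u
    have h1 : (∑ j ∈ Finset.range n, u ^ q ^ j) ^ q = ∑ j ∈ Finset.range n, u ^ q ^ (j + 1) := by
      have h := hψ 1 (Finset.range n) (fun j => u ^ q ^ j)
      simp only [pow_one] at h
      rw [h]
      exact Finset.sum_congr rfl fun j _ => by rw [← pow_mul, ← pow_succ]
    rw [h1]
    have h2 := Finset.sum_range_succ' (fun j => u ^ q ^ j) n
    have h3 := Finset.sum_range_succ (fun j => u ^ q ^ j) n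
    have h4 : u ^ q ^ n = u ^ q ^ 0 := by rw [hu, pow_zero, pow_one]
    have h5 := h2.symm.trans h3
    simp only [h4] at h5
    exact add_right_cancel h5
  have hone : ∀ t : E, t ^ q = t → t ≠ 0 → t ^ (q - 1) = 1 := by
    intro t ht htne
    have : t ^ (q - 1) * t = 1 * t := by
      rw [one_mul, ← pow_succ, Nat.sub_add_cancel hq2.le, ht]
    exact mul_right_cancel₀ htne this
  have hxpow : ∀ x : E, x ≠ 0 → x ^ (q ^ n - 1) = 1 := by
    intro x hx
    have : x ^ (q ^ n - 1) * x = 1 * x := by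
      rw [one_mul, ← pow_succ, Nat.sub_add_cancel hqn.le, hu]
    exact mul_right_cancel₀ hx this
  have hP : ∀ x : E, x ≠ 0 →
      (∑ i ∈ Finset.range n, ∑ j ∈ Finset.range n, a i ^ q ^ j * x ^ (q ^ j * (q ^ i - 1)))
        = ∑ j ∈ Finset.range n, ((∑ i ∈ Finset.range n, a i * x ^ q ^ i) / x) ^ q ^ j := by
    intro x hx
    rw [Finset.sum_comm]
    refine Finset.sum_congr rfl fun j _ => ?_
    rw [Finset.sum_div, hψ j]
    refine Finset.sum_congr rfl fun i _ => ?_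
    have hxi : x ^ q ^ i / x = x ^ (q ^ i - 1) := by
      rw [div_eq_iff hx, ← pow_succ, Nat.sub_add_cancel (Nat.one_le_pow _ _ (by omega))]
    rw [mul_div_assoc, hxi, mul_pow, ← pow_mul']
  have hP0 : (∑ i ∈ Finset.range n, ∑ j ∈ Finset.range n,
        a i ^ q ^ j * (0 : E) ^ (q ^ j * (q ^ i - 1)))
      = ∑ j ∈ Finset.range n, a 0 ^ q ^ j := by
    rw [Finset.sum_eq_single_of_mem 0 (Finset.mem_range.mpr hn)]
    · exact Finset.sum_congr rfl fun j _ => by simp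
    · intro i _ hi0
      refine Finset.sum_eq_zero fun j _ => ?_
      have h1 : q ^ j * (q ^ i - 1) ≠ 0 := by
        have := Nat.one_lt_pow hi0 hq2
        have := Nat.one_le_pow j q (by omega)
        exact Nat.mul_ne_zero (by omega) (by omega)
      rw [zero_pow h1, mul_zero]
  rw [show (X ^ q ^ n - X : E[X]) = X ^ Fintype.card E - X by rw [hE], aux_dvd_iff18]
  have heval : ∀ x : E,
      eval x ((∑ i ∈ Finset.range n, ∑ j ∈ Finset.range n,
              C ((a i) ^ q ^ j) * X ^ (q ^ j * (q ^ i - 1))) ^ (q - 1)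
            - (C ((∑ j ∈ Finset.range n, (a 0) ^ q ^ j) ^ (q - 1))
               + C (1 - (∑ j ∈ Finset.range n, (a 0) ^ q ^ j) ^ (q - 1))
                 * X ^ (q ^ n - 1)))
        = (∑ i ∈ Finset.range n, ∑ j ∈ Finset.range n,
              a i ^ q ^ j * x ^ (q ^ j * (q ^ i - 1))) ^ (q - 1)
          - ((∑ j ∈ Finset.range n, a 0 ^ q ^ j) ^ (q - 1)
             + (1 - (∑ j ∈ Finset.range n, a 0 ^ q ^ j) ^ (q - 1)) * x ^ (q ^ n - 1)) := by
    intro x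
    simp [eval_finset_sum]
  constructor
  · intro h x
    rw [heval, sub_eq_zero]
    by_cases hx : x = 0
    · subst hx
      rw [hP0, zero_pow hqn1, mul_zero, add_zero]
    · rw [hP x hx, hxpow x hx, mul_one]
      have e1 : ((∑ j ∈ Finset.range n, a 0 ^ q ^ j) ^ (q - 1)
          + (1 - (∑ j ∈ Finset.range n, a 0 ^ q ^ j) ^ (q - 1))) = 1 := by ring
      rw [e1]
      exact hone _ (hSq _) (h x hx)
  · intro h x hx hS0
    have hh := h x
    rw [heval, sub_eq_zero, hP x hx, hxpow x hx, mul_one, hS0, zero_pow hq1] at hh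
    have : (0 : E) = 1 := by rw [hh]; ring
    exact zero_ne_one this
end

section
/- Let q be a power of an odd prime, let a_1 ∈ F_{q^4} be nonzero, and let ã_0 ∈ F_{q^4} satisfy Tr_{q^4/q}(ã_0) = −1. Define the binary operation x∘y = xy + (a_1 y^{q^2} + ã_0 y)·Tr_{q^4/q}(x) on F_{q^4}. Suppose A(X) = Σ_{i=0}^{3} c_i X^{q^i} is a q-linearized polynomial over F_{q^4} such that for every y ∈ F_{q^4} there exists y' ∈ F_{q^4} with A(x)∘y = x∘y' for all x ∈ F_{q^4}. Then A(X) = uX for some u ∈ F_q, i.e., there exists u ∈ F_q with A(x) = ux for all x ∈ F_{q^4}. -/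
open Polynomial in
lemma stmt19_indep {E : Type*} [Field E] [Fintype E] {q : ℕ} (hq2 : 2 ≤ q)
    (hE : q ^ 4 ≤ Fintype.card E) (e : Fin 4 → E)
    (h : ∀ x : E, ∑ m : Fin 4, e m * x ^ q ^ (m : ℕ) = 0) : ∀ m, e m = 0 := by
  set P : E[X] := ∑ m : Fin 4, C (e m) * X ^ (q ^ (m : ℕ)) with hP
  have hdeg : P.natDegree < Fintype.card E := by
    have : P.natDegree ≤ q ^ 3 := by
      refine Polynomial.natDegree_sum_le_of_forall_le _ _ (fun i _ => ?_)
      refine (Polynomial.natDegree_C_mul_le _ _).trans ?_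
      rw [Polynomial.natDegree_X_pow]
      exact Nat.pow_le_pow_right (by omega) (by omega)
    refine lt_of_le_of_lt this (lt_of_lt_of_le ?_ hE)
    exact Nat.pow_lt_pow_right (by omega) (by omega)
  have hP0 : P = 0 := by
    refine Polynomial.eq_zero_of_natDegree_lt_card_of_eval_eq_zero P
      (Function.injective_id) (fun x => ?_) hdeg
    simp only [P, Polynomial.eval_finset_sum, Polynomial.eval_mul, Polynomial.eval_C,
      Polynomial.eval_pow, Polynomial.eval_X, id]
    exact h x
  have hiff : ∀ i j : Fin 4, q ^ (i : ℕ) = q ^ (j : ℕ) ↔ i = j := by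
    intro i j
    constructor
    · intro hij
      exact Fin.ext (Nat.pow_right_injective hq2 hij)
    · rintro rfl; rfl
  intro m
  have := congrArg (fun Q : E[X] => Q.coeff (q ^ (m : ℕ))) hP0
  simpa [P, Polynomial.finset_sum_coeff, Polynomial.coeff_C_mul, Polynomial.coeff_X_pow,
    hiff] using this

/-- for odd `q`, `a_1 ≠ 0`, `Tr_{q^4/q}(ã_0) = −1`, and the operation
`x∘y = xy + (a_1 y^{q^2} + ã_0 y)·Tr_{q^4/q}(x)` on `F_{q^4}`: if the `q`-linearized map
`A(x) = Σ_{i<4} c_i x^{q^i}` satisfies that for every `y` there is `y'` with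
`A(x)∘y = x∘y'` for all `x`, then `A(x) = u x` for some `u ∈ F_q`. -/
theorem stmt_19 (q : ℕ) (hq : ∃ p k : ℕ, p.Prime ∧ Odd p ∧ 0 < k ∧ q = p ^ k)
    (E : Type*) [Field E] [Fintype E] (hE : Fintype.card E = q ^ 4)
    (a1 a0 : E) (ha1 : a1 ≠ 0)
    (ha0 : ∑ j ∈ Finset.range 4, a0 ^ q ^ j = -1)
    (c : Fin 4 → E)
    (hA : ∀ y : E, ∃ y' : E, ∀ x : E,
        (∑ i : Fin 4, c i * x ^ q ^ (i : ℕ)) * y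
          + (a1 * y ^ q ^ 2 + a0 * y) *
            (∑ j ∈ Finset.range 4, (∑ i : Fin 4, c i * x ^ q ^ (i : ℕ)) ^ q ^ j)
        = x * y' + (a1 * y' ^ q ^ 2 + a0 * y') * (∑ j ∈ Finset.range 4, x ^ q ^ j)) :
    ∃ u : E, u ^ q = u ∧ ∀ x : E, (∑ i : Fin 4, c i * x ^ q ^ (i : ℕ)) = u * x := by
  obtain ⟨p, k, hp, hpodd, hk, hqpk⟩ := hq
  haveI hpf : Fact p.Prime := ⟨hp⟩
  have hq2 : 2 ≤ q := by
    have h2p : 2 ≤ p := hp.two_le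
    calc 2 ≤ p := h2p
    _ = p ^ 1 := (pow_one p).symm
    _ ≤ p ^ k := Nat.pow_le_pow_right (by omega) hk
    _ = q := hqpk.symm
  have hcard : Fintype.card E = p ^ (4 * k) := by
    rw [hE, hqpk, ← pow_mul, mul_comm]
  haveI hchar : CharP E p := by
    haveI : CharP E (ringChar E) := ringChar.charP E
    have hr : (ringChar E).Prime := CharP.char_is_prime E (ringChar E)
    obtain ⟨n, hn, hcardr⟩ := FiniteField.card E (ringChar E)
    have h1 : p ∣ (ringChar E) ^ (n : ℕ) := by
      rw [← hcardr, hcard]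
      exact dvd_pow_self p (by omega)
    have : p = ringChar E := (Nat.prime_dvd_prime_iff_eq hp hr).mp (hp.dvd_of_dvd_pow h1)
    rw [this]; exact ringChar.charP E
  have hadd : ∀ (j : ℕ) (a b : E), (a + b) ^ q ^ j = a ^ q ^ j + b ^ q ^ j := by
    intro j a b
    have hqj : q ^ j = p ^ (k * j) := by rw [hqpk, ← pow_mul]
    rw [hqj]
    exact add_pow_char_pow ..
  have h4 : ∀ x : E, x ^ q ^ 4 = x := fun x => by rw [← hE]; exact FiniteField.pow_card x
  have hpp : ∀ (x : E) (i j : ℕ), (x ^ q ^ i) ^ q ^ j = x ^ q ^ (i + j) := fun x i j => by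
    rw [← pow_mul, ← pow_add]
  have h5 : ∀ x : E, x ^ q ^ 5 = x ^ q ^ 1 := fun x => by
    rw [show (5 : ℕ) = 4 + 1 from rfl, ← hpp, h4]
  have h6 : ∀ x : E, x ^ q ^ 6 = x ^ q ^ 2 := fun x => by
    rw [show (6 : ℕ) = 4 + 2 from rfl, ← hpp, h4]
  have hEle : q ^ 4 ≤ Fintype.card E := le_of_eq hE.symm
  set d0 : E := c 0 + c 3 ^ q ^ 1 + c 2 ^ q ^ 2 + c 1 ^ q ^ 3 with hd0
  set d1 : E := c 1 + c 0 ^ q ^ 1 + c 3 ^ q ^ 2 + c 2 ^ q ^ 3 with hd1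
  set d2 : E := c 2 + c 1 ^ q ^ 1 + c 0 ^ q ^ 2 + c 3 ^ q ^ 3 with hd2
  set d3 : E := c 3 + c 2 ^ q ^ 1 + c 1 ^ q ^ 2 + c 0 ^ q ^ 3 with hd3
  -- coefficient extraction from hA
  have key : ∀ y : E, ∃ y' : E,
      (c 0 * y + (a1 * y ^ q ^ 2 + a0 * y) * d0 = y' + (a1 * y' ^ q ^ 2 + a0 * y')) ∧
      (c 1 * y + (a1 * y ^ q ^ 2 + a0 * y) * d1 = a1 * y' ^ q ^ 2 + a0 * y') ∧
      (c 2 * y + (a1 * y ^ q ^ 2 + a0 * y) * d2 = a1 * y' ^ q ^ 2 + a0 * y') ∧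
      (c 3 * y + (a1 * y ^ q ^ 2 + a0 * y) * d3 = a1 * y' ^ q ^ 2 + a0 * y') := by
    intro y
    obtain ⟨y', hy⟩ := hA y
    refine ⟨y', ?_⟩
    have he : ∀ m, (![c 0 * y + (a1 * y ^ q ^ 2 + a0 * y) * d0 - y' - (a1 * y' ^ q ^ 2 + a0 * y'),
        c 1 * y + (a1 * y ^ q ^ 2 + a0 * y) * d1 - (a1 * y' ^ q ^ 2 + a0 * y'),
        c 2 * y + (a1 * y ^ q ^ 2 + a0 * y) * d2 - (a1 * y' ^ q ^ 2 + a0 * y'),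
        c 3 * y + (a1 * y ^ q ^ 2 + a0 * y) * d3 - (a1 * y' ^ q ^ 2 + a0 * y')] : Fin 4 → E) m
        = 0 := by
      refine stmt19_indep hq2 hEle _ (fun x => ?_)
      have h := hy x
      have hq0 : ∀ a : E, a ^ q ^ 0 = a := fun a => by rw [pow_zero, pow_one]
      simp only [Fin.sum_univ_four, Finset.sum_range_succ, Finset.sum_range_zero, zero_add,
        Fin.val_zero, Fin.val_one, Fin.val_two, show ((3 : Fin 4) : ℕ) = 3 from rfl,
        hadd, mul_pow, hpp, Nat.reduceAdd, hq0, h4, h5, h6] at h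
      simp only [Fin.sum_univ_four, Matrix.cons_val_zero, Matrix.cons_val_one, Matrix.head_cons,
        Matrix.cons_val_two, Matrix.tail_cons, Matrix.cons_val_three,
        Fin.val_zero, Fin.val_one, Fin.val_two, show ((3 : Fin 4) : ℕ) = 3 from rfl, hq0]
      rw [hd0, hd1, hd2, hd3]
      linear_combination h
    have h0 := he 0
    have h1 := he 1
    have h2 := he 2
    have h3 := he 3
    simp only [Matrix.cons_val_zero, Matrix.cons_val_one, Matrix.head_cons,
      Matrix.cons_val_two, Matrix.tail_cons, Matrix.cons_val_three] at h0 h1 h2 h3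
    exact ⟨by linear_combination h0, by linear_combination h1, by linear_combination h2,
      by linear_combination h3⟩
  -- eliminate y' between components 1,2 and 1,3
  have h12 : ∀ y : E, (c 1 - c 2) * y + (d1 - d2) * (a1 * y ^ q ^ 2 + a0 * y) = 0 := by
    intro y
    obtain ⟨y', _, e1, e2, _⟩ := key y
    linear_combination e1 - e2
  have h13 : ∀ y : E, (c 1 - c 3) * y + (d1 - d3) * (a1 * y ^ q ^ 2 + a0 * y) = 0 := by
    intro y
    obtain ⟨y', _, e1, _, e3⟩ := key y
    linear_combination e1 - e3
  have sep : ∀ A B : E, (∀ y : E, A * y + B * (a1 * y ^ q ^ 2 + a0 * y) = 0) →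
      A + B * a0 = 0 ∧ B * a1 = 0 := by
    intro A B hAB
    have he := stmt19_indep hq2 hEle ![A + B * a0, 0, B * a1, 0] (fun y => by
      have hq0 : ∀ a : E, a ^ q ^ 0 = a := fun a => by rw [pow_zero, pow_one]
      simp only [Fin.sum_univ_four, Matrix.cons_val_zero, Matrix.cons_val_one, Matrix.head_cons,
        Matrix.cons_val_two, Matrix.tail_cons, Matrix.cons_val_three,
        Fin.val_zero, Fin.val_one, Fin.val_two, show ((3 : Fin 4) : ℕ) = 3 from rfl, hq0]
      linear_combination hAB y)
    have g0 := he 0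
    have g2 := he 2
    simp only [Matrix.cons_val_zero, Matrix.cons_val_two, Matrix.tail_cons,
      Matrix.head_cons] at g0 g2
    exact ⟨g0, g2⟩
  obtain ⟨g120, g122⟩ := sep _ _ h12
  obtain ⟨g130, g132⟩ := sep _ _ h13
  have hd12 : d1 = d2 := by
    have : d1 - d2 = 0 := by
      rcases mul_eq_zero.mp g122 with h | h
      · exact h
      · exact absurd h ha1
    linear_combination this
  have hc12 : c 1 = c 2 := by linear_combination g120 - a0 * hd12
  have hd13 : d1 = d3 := by
    have : d1 - d3 = 0 := by
      rcases mul_eq_zero.mp g132 with h | h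
      · exact h
      · exact absurd h ha1
    linear_combination this
  have hc13 : c 1 = c 3 := by linear_combination g130 - a0 * hd13
  -- Frobenius chain on the d's
  have e12 : d1 ^ q ^ 1 = d2 := by
    rw [hd1, hd2]
    simp only [hadd, hpp, Nat.reduceAdd, h4]
    ring
  have e30 : d3 ^ q ^ 1 = d0 := by
    rw [hd3, hd0]
    simp only [hadd, hpp, Nat.reduceAdd, h4]
    ring
  have hq_d1 : d1 ^ q ^ 1 = d1 := by rw [e12, ← hd12]
  have hd01 : d0 = d1 := by rw [← e30, ← hd13, hq_d1]
  set u : E := c 0 - c 1 with hu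
  -- the induced relation on y'
  have hyu : ∀ y : E, a1 * (u * y) ^ q ^ 2 + a0 * (u * y)
      = c 1 * y + (a1 * y ^ q ^ 2 + a0 * y) * d1 := by
    intro y
    obtain ⟨y', e0, e1, _, _⟩ := key y
    have hy'eq : y' = u * y := by
      linear_combination e1 - e0 + (a1 * y ^ q ^ 2 + a0 * y) * hd01 + y * hu
    rw [hy'eq] at e1
    exact e1.symm
  have he2 := stmt19_indep hq2 hEle
      ![a0 * u - c 1 - d1 * a0, 0, a1 * u ^ q ^ 2 - d1 * a1, 0] (fun y => by
    have hq0 : ∀ a : E, a ^ q ^ 0 = a := fun a => by rw [pow_zero, pow_one]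
    simp only [Fin.sum_univ_four, Matrix.cons_val_zero, Matrix.cons_val_one, Matrix.head_cons,
      Matrix.cons_val_two, Matrix.tail_cons, Matrix.cons_val_three,
      Fin.val_zero, Fin.val_one, Fin.val_two, show ((3 : Fin 4) : ℕ) = 3 from rfl, hq0]
    have h := hyu y
    rw [mul_pow] at h
    linear_combination h)
  have g0' := he2 0
  have g2' := he2 2
  simp only [Matrix.cons_val_zero, Matrix.cons_val_two, Matrix.tail_cons,
    Matrix.head_cons] at g0' g2'
  have hu2 : u ^ q ^ 2 = d1 := by
    have h' : a1 * (u ^ q ^ 2 - d1) = 0 := by linear_combination g2'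
    rcases mul_eq_zero.mp h' with h | h
    · exact absurd h ha1
    · linear_combination h
  -- u is fixed by Frobenius
  have hc0q : (c 0) ^ q ^ 1 = u ^ q ^ 1 + (c 1) ^ q ^ 1 := by
    have hc0 : c 0 = u + c 1 := by linear_combination hu
    rw [hc0]; exact hadd 1 u (c 1)
  have huq : u ^ q ^ 1 = u := by
    have hthis := hd01
    rw [hd0, hd1, ← hc12, ← hc13] at hthis
    linear_combination -hthis - hc0q - hu
  have hd1u : d1 = u := by
    have h2' : u ^ q ^ 2 = u := by rw [show (2 : ℕ) = 1 + 1 from rfl, ← hpp, huq, huq]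
    rw [← hu2, h2']
  have hc1 : c 1 = 0 := by linear_combination -g0' - a0 * hd1u
  refine ⟨u, ?_, ?_⟩
  · have := huq; rwa [pow_one] at this
  · intro x
    have hq0 : ∀ a : E, a ^ q ^ 0 = a := fun a => by rw [pow_zero, pow_one]
    simp only [Fin.sum_univ_four, Fin.val_zero, Fin.val_one, Fin.val_two,
      show ((3 : Fin 4) : ℕ) = 3 from rfl, hq0]
    rw [← hc12, ← hc13, hc1]
    have hc0u : c 0 = u := by linear_combination hc1 - hu
    rw [hc0u]
    ring
end
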